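/- arXiv:1111.3480 — 6 statements merged into one kernel-verified Lean document; each statement's English description precedes it below -/
import Mathlib

section
/- Let G be a finite connected bridgeless graph, let r ≥ 1 be an integer such that some vertex u of G satisfies d_G(u,v) ≤ r for every vertex v (i.e., rad(G) ≤ r), and let η ≥ 3 be an integer such that every edge of G is contained in a cycle of length at most η. Then G admits an orientation H of diameter at most 2·Σ_{i=1}^{r} min{2i, η−1}; in particular, G admits an orientation of diameter at most 2r(η−1). -/
open SimpleGraph Finset

variable {V : Type*}

/-- `o` is an orientation of `G`: each edge of `G` gets exactly one direction. -/
def IsOrientation (G : SimpleGraph V) (o : V → V → Prop) : Prop :=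
  (∀ x y, o x y → G.Adj x y) ∧ (∀ x y, G.Adj x y → (o x y ∨ o y x)) ∧
    (∀ x y, o x y → ¬ o y x)

/-- There is a directed path (with respect to `o`) from `x` to `y` of length at most `n`. -/
def DPathLE (o : V → V → Prop) (n : ℕ) (x y : V) : Prop :=
  ∃ m ≤ n, ∃ f : ℕ → V, f 0 = x ∧ f m = y ∧ (∀ i < m, o (f i) (f (i + 1))) ∧
    (∀ i ≤ m, ∀ j ≤ m, f i = f j → i = j)

/-- `G` admits an orientation of radius at most `R`. -/
def OrientRadiusLE (G : SimpleGraph V) (R : ℕ) : Prop :=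
  ∃ o : V → V → Prop, IsOrientation G o ∧
    ∃ u : V, ∀ v : V, DPathLE o R u v ∧ DPathLE o R v u

/-- `G` admits an orientation of diameter at most `D`. -/
def OrientDiamLE (G : SimpleGraph V) (D : ℕ) : Prop :=
  ∃ o : V → V → Prop, IsOrientation G o ∧ ∀ x y : V, DPathLE o D x y

/-- The edge `e` lies on a cycle of `G` of length at most `n`. -/
def InCycleLE (G : SimpleGraph V) (e : Sym2 V) (n : ℕ) : Prop :=
  ∃ (v : V) (c : G.Walk v v), c.IsCycle ∧ e ∈ c.edges ∧ c.length ≤ n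

/-- `G` is bridgeless: no edge is a cut edge. -/
def Bridgeless (G : SimpleGraph V) : Prop :=
  ∀ e ∈ G.edgeSet, ¬ G.IsBridge e

/-- `c` is a rainbow `k`-edge-coloring of `G`: every two distinct vertices are joined
by a path whose edges receive pairwise distinct colors. -/
def IsRainbowColoring (G : SimpleGraph V) (k : ℕ) (c : Sym2 V → Fin k) : Prop :=
  ∀ x y : V, x ≠ y → ∃ p : G.Walk x y, p.IsPath ∧ (p.edges.map c).Nodup

/-- The rainbow connection number of `G` is at most `k`. -/
def RcLE (G : SimpleGraph V) (k : ℕ) : Prop :=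
  ∃ c : Sym2 V → Fin k, IsRainbowColoring G k c

/-!
Grow a core `A ∋ u` in which every vertex reaches `u` and is reached from `u` quickly, one
distance layer at a time. If every vertex is within distance `r` of `A`, the neighbours of `A`
are attached by ears: for an edge `bv` leaving `A`, a shortest walk from `v` back to `A` avoiding
`bv` has length at most `η - 1` (use the short cycle through `bv`) and at most `2r` (otherwise
its vertex at position `r` would escape to `A` faster). To orient each ear so that its vertices
reach `A` and are reached from `A` within `min (2r) (η - 1)` steps, every core vertex `z` carries
in- and out-distances `p, q` with `min p q ≤ d(z, A)`, and the ear is directed towards the side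
of its attachment vertex where this minimum is attained. After the layer every vertex is within
`r - 1` of the enlarged core, so the layers contribute `∑ min (2i) (η - 1)` in each direction.
-/

namespace SimpleGraph.Walk

variable {G : SimpleGraph V}

lemma exists_eq_append_cons_of_mem_darts {u w : V} (p : G.Walk u w) {d : G.Dart}
    (hd : d ∈ p.darts) :
    ∃ (q : G.Walk u d.fst) (r : G.Walk d.snd w), p = q.append (cons d.adj r) := by
  induction p with
  | nil => simp at hd
  | cons h p ih =>
    rcases List.mem_cons.1 hd with rfl | hd
    · exact ⟨nil, p, rfl⟩
    · obtain ⟨q, r, rfl⟩ := ih hd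
      exact ⟨cons h q, r, rfl⟩

lemma exists_eq_append_of_first_mem {S : Set V} {u w : V} (p : G.Walk u w) (hw : w ∈ S) :
    ∃ z ∈ S, ∃ (q : G.Walk u z) (r : G.Walk z w),
      p = q.append r ∧ ∀ x ∈ q.support, x ∈ S → x = z := by
  induction p with
  | nil => exact ⟨_, hw, nil, nil, rfl, by simp⟩
  | @cons u _ _ h p ih =>
    by_cases hu : u ∈ S
    · exact ⟨u, hu, nil, cons h p, rfl, by simp⟩
    · obtain ⟨z, hz, q, r, rfl, hq⟩ := ih hw
      refine ⟨z, hz, cons h q, r, rfl, ?_⟩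
      rintro x (_ | ⟨_, hx⟩) hxS
      · exact absurd hxS hu
      · exact hq x hx hxS

end SimpleGraph.Walk

open SimpleGraph.Walk

section Detours

variable {G : SimpleGraph V}

def HasDetoursLE (G : SimpleGraph V) (k : ℕ) : Prop :=
  ∀ x y, G.Adj x y → ∃ p : (G.deleteEdges {s(x, y)}).Walk x y, p.length ≤ k

lemma hasDetoursLE_of_inCycleLE {η : ℕ} (h : ∀ e ∈ G.edgeSet, InCycleLE G e η) :
    HasDetoursLE G (η - 1) := by
  intro x y hxy
  obtain ⟨w, c, hc, he, hlen⟩ := h s(x, y) hxy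
  obtain ⟨d, hd, hde⟩ := List.mem_map.1 he
  obtain ⟨q, r, rfl⟩ := c.exists_eq_append_cons_of_mem_darts hd
  have hnd := hc.edges_nodup
  simp only [edges_append, edges_cons, List.nodup_append, List.nodup_cons, List.mem_cons] at hnd
  have hdet : d.edge ∉ (r.append q).edges := by
    rw [edges_append, List.mem_append, not_or]
    exact ⟨hnd.2.1.1, fun h => hnd.2.2 _ h _ (Or.inl rfl) rfl⟩
  have hdet_len : ((r.append q).toDeleteEdge d.edge hdet).length ≤ η - 1 := by
    simp only [length_append, length_cons, length_transfer] at hlen ⊢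
    omega
  obtain ⟨⟨a, b⟩, hab⟩ := d
  rcases Sym2.eq_iff.1 hde with ⟨rfl, rfl⟩ | ⟨rfl, rfl⟩
  · exact ⟨_, (length_reverse _).trans_le hdet_len⟩
  · rw [Sym2.eq_swap]
    exact ⟨_, hdet_len⟩

end Detours

section DistToSet

variable {G : SimpleGraph V} {A : Set V}

def DistToSetLE (G : SimpleGraph V) (A : Set V) (w : V) (n : ℕ) : Prop :=
  ∃ a ∈ A, ∃ p : G.Walk w a, p.length ≤ n

lemma DistToSetLE.exists_shortest_path {w : V} (h : ∃ n, DistToSetLE G A w n) :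
    ∃ a ∈ A, ∃ P : G.Walk w a, P.IsPath ∧ ∀ n, DistToSetLE G A w n → P.length ≤ n := by
  classical
  obtain ⟨a, ha, P, hP⟩ := Nat.find_spec h
  exact ⟨a, ha, P.bypass, P.bypass_isPath,
    fun n hn => (P.length_bypass_le_length.trans hP).trans (Nat.find_min' h hn)⟩

lemma DistToSetLE.of_succ {A' : Set V} {w : V} {n : ℕ} (h : DistToSetLE G A w (n + 1))
    (hAA' : A ⊆ A') (hnbr : ∀ b ∈ A, ∀ v, G.Adj b v → v ∈ A') : DistToSetLE G A' w n := by
  obtain ⟨a, ha, p, hp⟩ := h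
  rw [← length_reverse] at hp
  cases hr : p.reverse with
  | nil => exact ⟨_, hAA' ha, nil, Nat.zero_le _⟩
  | cons hadj q =>
    rw [hr, length_cons] at hp
    exact ⟨_, hnbr a ha _ hadj, q.reverse, by rw [length_reverse]; omega⟩

/-- Cut a walk to `A` at its first traversal of `bv`: it is then at `b ∈ A` or at `v`. -/
lemma DistToSetLE.deleteEdges_or {b v w : V} {n : ℕ} (hb : b ∈ A) (h : DistToSetLE G A w n) :
    DistToSetLE (G.deleteEdges {s(b, v)}) A w n ∨
      ∃ p : (G.deleteEdges {s(b, v)}).Walk w v, p.length < n := by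
  obtain ⟨a, ha, p, hp⟩ := h
  suffices DistToSetLE (G.deleteEdges {s(b, v)}) A w p.length ∨
      ∃ q : (G.deleteEdges {s(b, v)}).Walk w v, q.length < p.length by
    rcases this with ⟨a', ha', q, hq⟩ | ⟨q, hq⟩
    exacts [Or.inl ⟨a', ha', q, hq.trans hp⟩, Or.inr ⟨q, hq.trans_le hp⟩]
  clear hp
  induction p with
  | nil => exact Or.inl ⟨_, ha, nil, le_rfl⟩
  | @cons w w' _ hadj p ih =>
    by_cases he : s(w, w') = s(b, v)
    · rcases Sym2.eq_iff.1 he with ⟨rfl, -⟩ | ⟨rfl, -⟩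
      · exact Or.inl ⟨w, hb, nil, Nat.zero_le _⟩
      · exact Or.inr ⟨nil, by simp⟩
    · have hadj' : (G.deleteEdges {s(b, v)}).Adj w w' := by simp [hadj, he]
      rcases ih ha with ⟨a', ha', q, hq⟩ | ⟨q, hq⟩
      · exact Or.inl ⟨a', ha', cons hadj' q, by simpa using hq⟩
      · exact Or.inr ⟨cons hadj' q, by simpa using hq⟩

end DistToSet

section ShortestEar

variable {G : SimpleGraph V} {A : Set V} {b v x a : V}

/-- A short `G`-walk from `x` to `A` either avoids `bv`, and then competes with `q`, or reaches `v`
first, and then competes with `p`. -/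
lemma min_le_of_shortest (hb : b ∈ A) (ha : a ∈ A)
    (p : (G.deleteEdges {s(b, v)}).Walk v x) (q : (G.deleteEdges {s(b, v)}).Walk x a)
    (hshort : ∀ n, DistToSetLE (G.deleteEdges {s(b, v)}) A v n → p.length + q.length ≤ n)
    {n : ℕ} (hn : DistToSetLE G A x n) : min (p.length + 1) q.length ≤ n := by
  rcases hn.deleteEdges_or hb with ⟨a', ha', r, hr⟩ | ⟨r, hr⟩
  · have := hshort _ ⟨a', ha', p.append r, le_rfl⟩
    rw [length_append] at this
    exact (min_le_right _ _).trans (by omega)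
  · have := hshort _ ⟨a, ha, r.reverse.append q, le_rfl⟩
    rw [length_append, length_reverse] at this
    exact (min_le_left _ _).trans (by omega)

lemma length_le_two_mul_of_shortest {r : ℕ} (hb : b ∈ A) (ha : a ∈ A)
    (hball : ∀ w, DistToSetLE G A w r) (P : (G.deleteEdges {s(b, v)}).Walk v a)
    (hshort : ∀ n, DistToSetLE (G.deleteEdges {s(b, v)}) A v n → P.length ≤ n) :
    P.length ≤ 2 * r := by
  by_contra! hlong
  have := min_le_of_shortest hb ha (P.take r) (P.drop r)
    (by simpa [min_eq_left (by omega : r ≤ P.length), show r + (P.length - r) = P.length by omega]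
      using hshort) (hball _)
  simp only [take_length, drop_length] at this
  omega

end ShortestEar

section DirectedWalks

variable {o o' : V → V → Prop} {m n : ℕ} {x y z : V}

lemma DPathLE.mono (h : DPathLE o m x y) (hmn : m ≤ n) : DPathLE o n x y :=
  let ⟨k, hk, hf⟩ := h
  ⟨k, hk.trans hmn, hf⟩

lemma DPathLE.snoc (h : DPathLE o n x y) (hyz : o y z) : DPathLE o (n + 1) x z := by
  classical
  obtain ⟨m, hm, f, hf0, hfm, hstep, hinj⟩ := h
  by_cases hz : ∃ k ≤ m, f k = z
  · obtain ⟨k, hk, rfl⟩ := hz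
    exact ⟨k, by omega, f, hf0, rfl, fun i hi => hstep i (by omega),
      fun i hi j hj => hinj i (by omega) j (by omega)⟩
  · push Not at hz
    refine ⟨m + 1, by omega, fun i => if i ≤ m then f i else z, by simp [hf0], by simp, ?_, ?_⟩
    · intro i hi
      rcases Nat.lt_or_eq_of_le (Nat.le_of_lt_succ hi) with hi | rfl
      · simpa [hi.le, Nat.succ_le_of_lt hi] using hstep i hi
      · simpa [hfm] using hyz
    · intro i hi j hj hij
      by_cases hi' : i ≤ m <;> by_cases hj' : j ≤ m <;>
        simp only [hi', hj', if_true, if_false] at hij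
      · exact hinj i hi' j hj' hij
      · exact absurd hij (hz i hi')
      · exact absurd hij.symm (hz j hj')
      · omega

inductive DirReachLE (o : V → V → Prop) : ℕ → V → V → Prop
  | refl (n : ℕ) (x : V) : DirReachLE o n x x
  | tail {n : ℕ} {x y z : V} : DirReachLE o n x y → o y z → DirReachLE o (n + 1) x z

namespace DirReachLE

lemma mono (h : DirReachLE o m x y) (hmn : m ≤ n) : DirReachLE o n x y := by
  induction h generalizing n with
  | refl => exact refl _ _
  | tail _ hyz ih =>
    cases n with
    | zero => omega
    | succ n => exact tail (ih (by omega)) hyz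

lemma mono_rel (h : DirReachLE o n x y) (ho : o ≤ o') : DirReachLE o' n x y := by
  induction h with
  | refl => exact refl _ _
  | tail _ hyz ih => exact tail ih (ho _ _ hyz)

lemma single (h : o x y) : DirReachLE o 1 x y := tail (refl 0 x) h

lemma trans (h₁ : DirReachLE o m x y) (h₂ : DirReachLE o n y z) : DirReachLE o (m + n) x z := by
  induction h₂ with
  | refl => exact h₁.mono (Nat.le_add_right _ _)
  | tail _ hyz ih => exact tail (ih h₁) hyz

lemma swap (h : DirReachLE o n x y) : DirReachLE (Function.swap o) n y x := by
  induction h with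
  | refl => exact refl _ _
  | tail _ hyz ih => simpa [Nat.add_comm] using (single (o := Function.swap o) hyz).trans ih

lemma of_walk {G : SimpleGraph V} (p : G.Walk x y) (h : ∀ d ∈ p.darts, o d.fst d.snd) :
    DirReachLE o p.length x y := by
  induction p with
  | nil => exact refl 0 _
  | cons hadj p ih =>
    simpa [Nat.add_comm] using (single (h _ List.mem_cons_self)).trans
      (ih fun d hd => h d (List.mem_cons_of_mem _ hd))

lemma toDPathLE (h : DirReachLE o n x y) : DPathLE o n x y := by
  induction h with
  | refl n x => exact ⟨0, Nat.zero_le _, fun _ => x, rfl, rfl, by simp, by omega⟩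
  | tail _ hyz ih => exact ih.snoc hyz

end DirReachLE

lemma OrientDiamLE.mono {G : SimpleGraph V} {D D' : ℕ} (h : OrientDiamLE G D) (hD : D ≤ D') :
    OrientDiamLE G D' :=
  let ⟨o, ho, hdiam⟩ := h
  ⟨o, ho, fun x y => (hdiam x y).mono hD⟩

end DirectedWalks

section PartialOrientations

variable {G : SimpleGraph V} {S T : Set V} {o : V → V → Prop}

def IsPartialOrientOn (G : SimpleGraph V) (S : Set V) (o : V → V → Prop) : Prop :=
  ∀ a b, o a b → G.Adj a b ∧ ¬ o b a ∧ a ∈ S ∧ b ∈ S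

lemma IsPartialOrientOn.swap (ho : IsPartialOrientOn G S o) :
    IsPartialOrientOn G S (Function.swap o) := fun a b h =>
  let ⟨hadj, hba, ha, hb⟩ := ho b a h
  ⟨hadj.symm, hba, hb, ha⟩

lemma IsPartialOrientOn.exists_isOrientation (ho : IsPartialOrientOn G S o) :
    ∃ o', IsOrientation G o' ∧ o ≤ o' := by
  let : LinearOrder V := WellOrderingRel.isWellOrder.linearOrder
  refine ⟨fun a b => o a b ∨ (G.Adj a b ∧ ¬ o b a ∧ a < b), ⟨?_, ?_, ?_⟩, fun a b h => Or.inl h⟩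
  · rintro a b (h | ⟨h, -⟩)
    exacts [(ho a b h).1, h]
  · intro a b hab
    by_cases h₁ : o a b
    · exact Or.inl (Or.inl h₁)
    by_cases h₂ : o b a
    · exact Or.inr (Or.inl h₂)
    rcases lt_or_gt_of_ne hab.ne with h | h
    exacts [Or.inl (Or.inr ⟨hab, h₂, h⟩), Or.inr (Or.inr ⟨hab.symm, h₁, h⟩)]
  · rintro a b (h | ⟨-, h, hlt⟩) (h' | ⟨-, h', hlt'⟩)
    exacts [(ho a b h).2.1 h', h' h, h h', lt_asymm hlt hlt']

lemma IsPartialOrientOn.sup_darts {u w : V} (ho : IsPartialOrientOn G S o) (E : G.Walk u w)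
    (hE : E.IsTrail) (hleave : ∀ d ∈ E.darts, ¬ (d.fst ∈ S ∧ d.snd ∈ S)) :
    IsPartialOrientOn G (S ∪ {x | x ∈ E.support})
      (fun a b => o a b ∨ ∃ h : G.Adj a b, ⟨(a, b), h⟩ ∈ E.darts) := by
  rintro a b (h | ⟨hab, hd⟩)
  · obtain ⟨hadj, hba, ha, hb⟩ := ho a b h
    refine ⟨hadj, ?_, Or.inl ha, Or.inl hb⟩
    rintro (h' | ⟨_, hd⟩)
    exacts [hba h', hleave _ hd ⟨hb, ha⟩]
  · refine ⟨hab, ?_, Or.inr (E.dart_fst_mem_support_of_mem_darts hd),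
      Or.inr (E.dart_snd_mem_support_of_mem_darts hd)⟩
    rintro (h' | ⟨hba, hd'⟩)
    · exact hleave _ hd ⟨(ho b a h').2.2.2, (ho b a h').2.2.1⟩
    · have := List.inj_on_of_nodup_map hE.edges_nodup hd hd' Sym2.eq_swap
      exact hab.ne (congrArg (fun d : G.Dart => d.fst) this)

end PartialOrientations

section Ears

variable {G : SimpleGraph V} {A A₁ : Set V} {M : ℕ} {o o' : V → V → Prop} {z : V}

/-- The invariant of the ear decomposition; the clause `min p q ≤ d(z, A)` is what allows an ear
attached at `z` to be directed towards the cheaper side. -/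
def Anchored (G : SimpleGraph V) (A : Set V) (M : ℕ) (o : V → V → Prop) (z : V) : Prop :=
  ∃ p q, p ≤ M ∧ q ≤ M ∧ (∀ n, DistToSetLE G A z n → min p q ≤ n) ∧
    (∃ a ∈ A, DirReachLE o p a z) ∧ ∃ a ∈ A, DirReachLE o q z a

lemma anchored_of_mem (hz : z ∈ A) : Anchored G A M o z :=
  ⟨0, 0, Nat.zero_le _, Nat.zero_le _, fun _ _ => by simp, ⟨z, hz, .refl 0 z⟩, ⟨z, hz, .refl 0 z⟩⟩

lemma Anchored.mono (h : Anchored G A M o z) (ho : o ≤ o') : Anchored G A M o' z :=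
  let ⟨p, q, hp, hq, hmin, ⟨a, ha, hin⟩, ⟨a', ha', hout⟩⟩ := h
  ⟨p, q, hp, hq, hmin, ⟨a, ha, hin.mono_rel ho⟩, ⟨a', ha', hout.mono_rel ho⟩⟩

lemma Anchored.swap (h : Anchored G A M o z) : Anchored G A M (Function.swap o) z :=
  let ⟨p, q, hp, hq, hmin, ⟨a, ha, hin⟩, ⟨a', ha', hout⟩⟩ := h
  ⟨q, p, hq, hp, fun n hn => min_comm q p ▸ hmin n hn, ⟨a', ha', hout.swap⟩, ⟨a, ha, hin.swap⟩⟩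

lemma Anchored.out_or_in {n : ℕ} (h : Anchored G A M o z) (hn : DistToSetLE G A z n) :
    (∃ a ∈ A, ∃ q ≤ n, DirReachLE o q z a) ∨
      ∃ a ∈ A, ∃ p ≤ n, DirReachLE (Function.swap o) p z a := by
  obtain ⟨p, q, -, -, hmin, ⟨a, ha, hin⟩, ⟨a', ha', hout⟩⟩ := h
  rcases min_le_iff.1 (hmin n hn) with hp | hq
  exacts [Or.inr ⟨a, ha, p, hp, hin.swap⟩, Or.inl ⟨a', ha', q, hq, hout⟩]

lemma isTrail_cons_mapLe_deleteEdges {b v z : V} (hbv : G.Adj b v)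
    {Q : (G.deleteEdges {s(b, v)}).Walk v z} (hQ : Q.IsTrail) :
    (cons hbv (Q.mapLe (G.deleteEdges_le _))).IsTrail := by
  refine (isTrail_cons _ _).2 ⟨hQ.mapLe _, fun h => ?_⟩
  rw [edges_mapLe_eq_edges] at h
  simpa using Q.edges_subset_edgeSet h

/-- The ear `b → v → ⋯ → z` is oriented from `b` to `z`; the new vertices then reach `A` through
`z`, which `hout` makes fast enough. -/
lemma exists_forward_ear {b v a : V} (ho : IsPartialOrientOn G A₁ o)
    (hanch : ∀ w ∈ A₁, Anchored G A M o w) (hAA₁ : A ⊆ A₁) (hb : b ∈ A) (hbv : G.Adj b v)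
    (hv : v ∉ A₁) (Q : (G.deleteEdges {s(b, v)}).Walk v z) (R : (G.deleteEdges {s(b, v)}).Walk z a)
    (ha : a ∈ A) (hQ : Q.IsPath) (hz : z ∈ A₁) (hfirst : ∀ x ∈ Q.support, x ∈ A₁ → x = z)
    (hshort : ∀ n, DistToSetLE (G.deleteEdges {s(b, v)}) A v n → Q.length + R.length ≤ n)
    (hM : Q.length + R.length ≤ M) (hout : ∃ a' ∈ A, ∃ q ≤ R.length, DirReachLE o q z a') :
    ∃ A₂ o₂, A₁ ⊆ A₂ ∧ v ∈ A₂ ∧ o ≤ o₂ ∧ IsPartialOrientOn G A₂ o₂ ∧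
      ∀ w ∈ A₂, Anchored G A M o₂ w := by
  classical
  have hle : G.deleteEdges {s(b, v)} ≤ G := G.deleteEdges_le _
  set E : G.Walk b z := cons hbv (Q.mapLe hle)
  have hE : E.IsTrail := isTrail_cons_mapLe_deleteEdges hbv hQ.isTrail
  have hleave : ∀ d ∈ E.darts, ¬ (d.fst ∈ A₁ ∧ d.snd ∈ A₁) := by
    rintro d hd ⟨h₁, h₂⟩
    rcases List.mem_cons.1 hd with rfl | hd
    · exact hv h₂
    · have hfst := hfirst _ (by simpa using (Q.mapLe hle).dart_fst_mem_support_of_mem_darts hd) h₁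
      have hsnd := hfirst _ (by simpa using (Q.mapLe hle).dart_snd_mem_support_of_mem_darts hd) h₂
      exact d.adj.ne (hfst.trans hsnd.symm)
  set o₂ : V → V → Prop := fun a b => o a b ∨ ∃ h : G.Adj a b, ⟨(a, b), h⟩ ∈ E.darts
  have hoo₂ : o ≤ o₂ := fun _ _ h => Or.inl h
  have along : ∀ {x y : V} (p : G.Walk x y), p.darts ⊆ E.darts → DirReachLE o₂ p.length x y :=
    fun p hp => DirReachLE.of_walk p fun d hd => Or.inr ⟨d.adj, hp hd⟩
  refine ⟨A₁ ∪ {x | x ∈ E.support}, o₂, Set.subset_union_left, Or.inr (by simp [E]), hoo₂,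
    ho.sup_darts E hE hleave, ?_⟩
  rintro x (hx | hx)
  · exact (hanch x hx).mono hoo₂
  by_cases hx₁ : x ∈ A₁
  · exact (hanch x hx₁).mono hoo₂
  have hxQ : x ∈ Q.support := by
    have hxb : x ≠ b := fun h => hx₁ (h ▸ hAA₁ hb)
    simpa [E, hxb] using hx
  have hxz : x ≠ z := fun h => hx₁ (h ▸ hz)
  obtain ⟨a', ha', q, hq, hreach⟩ := hout
  have hsplit := congrArg length (Q.take_spec hxQ)
  have hpos := length_takeUntil_lt_length hxQ hxz
  rw [length_append] at hsplit
  refine ⟨(Q.takeUntil x hxQ).length + 1, (Q.dropUntil x hxQ).length + q, by omega, by omega,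
    fun n hn => ?_, ⟨b, hb, ?_⟩, ⟨a', ha', ?_⟩⟩
  · have := min_le_of_shortest hb ha (Q.takeUntil x hxQ) ((Q.dropUntil x hxQ).append R)
      (by simpa [← hsplit, Nat.add_assoc] using hshort) hn
    rw [length_append] at this
    exact le_trans (min_le_min_left _ (by omega)) this
  · simpa using along (cons hbv ((Q.takeUntil x hxQ).mapLe hle)) (List.cons_subset_cons _
      (by simpa using List.map_subset _ (Q.darts_takeUntil_subset_darts hxQ)))
  · simpa using (along ((Q.dropUntil x hxQ).mapLe hle) (List.subset_cons_of_subset _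
      (by simpa using List.map_subset _ (Q.darts_dropUntil_subset_darts hxQ)))).trans
      (hreach.mono_rel hoo₂)

end Ears

section Layers

variable {G : SimpleGraph V} {A A₁ : Set V} {k r : ℕ} {o : V → V → Prop}

lemma exists_ear_step {b v : V} (hdet : HasDetoursLE G k) (hball : ∀ w, DistToSetLE G A w r)
    (ho : IsPartialOrientOn G A₁ o) (hanch : ∀ w ∈ A₁, Anchored G A (min (2 * r) k) o w)
    (hAA₁ : A ⊆ A₁) (hb : b ∈ A) (hbv : G.Adj b v) (hv : v ∉ A₁) :
    ∃ A₂ o₂, A₁ ⊆ A₂ ∧ v ∈ A₂ ∧ o ≤ o₂ ∧ IsPartialOrientOn G A₂ o₂ ∧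
      ∀ w ∈ A₂, Anchored G A (min (2 * r) k) o₂ w := by
  have hdetour : DistToSetLE (G.deleteEdges {s(b, v)}) A v k := by
    obtain ⟨p, hp⟩ := hdet v b hbv.symm
    rw [Sym2.eq_swap]
    exact ⟨b, hb, p, hp⟩
  obtain ⟨a, ha, P, hP, hshort⟩ := DistToSetLE.exists_shortest_path ⟨k, hdetour⟩
  have hM : P.length ≤ min (2 * r) k :=
    le_min (length_le_two_mul_of_shortest hb ha hball P hshort) (hshort k hdetour)
  obtain ⟨z, hz, Q, R, rfl, hfirst⟩ := P.exists_eq_append_of_first_mem (hAA₁ ha)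
  rw [length_append] at hM hshort
  have hzA : DistToSetLE G A z R.length := ⟨a, ha, R.mapLe (G.deleteEdges_le _), by simp⟩
  rcases (hanch z hz).out_or_in hzA with hout | hin
  · exact exists_forward_ear ho hanch hAA₁ hb hbv hv Q R ha hP.of_append_left hz hfirst hshort hM
      hout
  · obtain ⟨A₂, o₂, h₁₂, hv₂, hle, ho₂, hanch₂⟩ := exists_forward_ear ho.swap
      (fun w hw => (hanch w hw).swap) hAA₁ hb hbv hv Q R ha hP.of_append_left hz hfirst hshort hM
      hin
    exact ⟨A₂, Function.swap o₂, h₁₂, hv₂, fun x y h => hle y x h, ho₂.swap,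
      fun w hw => (hanch₂ w hw).swap⟩

lemma exists_layer [Finite V] (hdet : HasDetoursLE G k) (hball : ∀ w, DistToSetLE G A w r)
    (ho : IsPartialOrientOn G A o) :
    ∃ A' o', A ⊆ A' ∧ (∀ b ∈ A, ∀ v, G.Adj b v → v ∈ A') ∧ o ≤ o' ∧
      IsPartialOrientOn G A' o' ∧ ∀ w ∈ A', Anchored G A (min (2 * r) k) o' w := by
  suffices ∀ n (A₁ : Set V) o₁, A₁ᶜ.ncard = n → A ⊆ A₁ → o ≤ o₁ → IsPartialOrientOn G A₁ o₁ →
      (∀ w ∈ A₁, Anchored G A (min (2 * r) k) o₁ w) →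
      ∃ A' o', A ⊆ A' ∧ (∀ b ∈ A, ∀ v, G.Adj b v → v ∈ A') ∧ o ≤ o' ∧
        IsPartialOrientOn G A' o' ∧ ∀ w ∈ A', Anchored G A (min (2 * r) k) o' w from
    this _ A o rfl subset_rfl le_rfl ho fun w hw => anchored_of_mem hw
  intro n
  induction n using Nat.strong_induction_on with
  | _ n ih =>
    intro A₁ o₁ hn hAA₁ hoo₁ ho₁ hanch
    by_cases hnbr : ∀ b ∈ A, ∀ v, G.Adj b v → v ∈ A₁
    · exact ⟨A₁, o₁, hAA₁, hnbr, hoo₁, ho₁, hanch⟩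
    push Not at hnbr
    obtain ⟨b, hb, v, hbv, hv⟩ := hnbr
    obtain ⟨A₂, o₂, h₁₂, hv₂, hle, ho₂, hanch₂⟩ :=
      exists_ear_step hdet hball ho₁ hanch hAA₁ hb hbv hv
    have hlt : A₂ᶜ.ncard < n :=
      hn ▸ Set.ncard_lt_ncard ⟨Set.compl_subset_compl.2 h₁₂, fun h => h hv hv₂⟩
    exact ih _ hlt A₂ o₂ rfl (hAA₁.trans h₁₂) (hoo₁.trans hle) ho₂ hanch₂

lemma exists_orientation_dirReachLE [Finite V] (hdet : HasDetoursLE G k) (u : V) (r : ℕ)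
    (A : Set V) (c : ℕ) (o : V → V → Prop) (ho : IsPartialOrientOn G A o)
    (hreach : ∀ a ∈ A, DirReachLE o c u a ∧ DirReachLE o c a u)
    (hball : ∀ w, DistToSetLE G A w r) :
    ∃ o', IsOrientation G o' ∧ ∀ w,
      DirReachLE o' (c + ∑ i ∈ Finset.Icc 1 r, min (2 * i) k) u w ∧
        DirReachLE o' (c + ∑ i ∈ Finset.Icc 1 r, min (2 * i) k) w u := by
  induction r generalizing A c o with
  | zero =>
    obtain ⟨o', ho', hle⟩ := ho.exists_isOrientation
    refine ⟨o', ho', fun w => ?_⟩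
    obtain ⟨a, ha, p, hp⟩ := hball w
    obtain rfl : w = a := p.eq_of_length_eq_zero (by omega)
    simpa using And.imp (·.mono_rel hle) (·.mono_rel hle) (hreach w ha)
  | succ r ih =>
    obtain ⟨A', o', hAA', hnbr, hle, ho', hanch⟩ := exists_layer hdet hball ho
    have hreach' : ∀ a ∈ A', DirReachLE o' (c + min (2 * (r + 1)) k) u a ∧
        DirReachLE o' (c + min (2 * (r + 1)) k) a u := by
      intro a ha
      obtain ⟨p, q, hp, hq, -, ⟨a₁, ha₁, hin⟩, ⟨a₂, ha₂, hout⟩⟩ := hanch a ha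
      exact ⟨(((hreach a₁ ha₁).1.mono_rel hle).trans hin).mono (by omega),
        (hout.trans ((hreach a₂ ha₂).2.mono_rel hle)).mono (by omega)⟩
    obtain ⟨o'', ho'', hreach''⟩ := ih A' _ o' ho' hreach' fun w => (hball w).of_succ hAA' hnbr
    refine ⟨o'', ho'', fun w => ?_⟩
    rw [Finset.sum_Icc_succ_top (by omega), Nat.add_comm _ (min _ _), ← Nat.add_assoc]
    exact hreach'' w

end Layers

theorem oriented_diameter_bound_general [Fintype V] (G : SimpleGraph V)
    (hconn : G.Connected)
    (r : ℕ) (u : V) (hu : ∀ v : V, G.dist u v ≤ r)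
    (η : ℕ) (hcyc : ∀ e ∈ G.edgeSet, InCycleLE G e η) :
    OrientDiamLE G (2 * ∑ i ∈ Finset.Icc 1 r, min (2 * i) (η - 1)) ∧
      OrientDiamLE G (2 * (r * (η - 1))) := by
  have hball : ∀ w, DistToSetLE G {u} w r := fun w =>
    let ⟨p, hp⟩ := hconn.exists_walk_length_eq_dist w u
    ⟨u, rfl, p, hp ▸ G.dist_comm ▸ hu w⟩
  obtain ⟨o, ho, hreach⟩ := exists_orientation_dirReachLE (hasDetoursLE_of_inCycleLE hcyc) u r
    {u} 0 (fun _ _ => False) (fun _ _ h => h.elim) (by simp [DirReachLE.refl]) hball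
  have hdiam : OrientDiamLE G (2 * ∑ i ∈ Finset.Icc 1 r, min (2 * i) (η - 1)) :=
    ⟨o, ho, fun x y => by simpa [two_mul] using ((hreach x).2.trans (hreach y).1).toDPathLE⟩
  have hsum : ∑ i ∈ Finset.Icc 1 r, min (2 * i) (η - 1) ≤ r * (η - 1) := by
    simpa using Finset.sum_le_card_nsmul (Finset.Icc 1 r) _ (η - 1) fun i _ => min_le_right _ _
  exact ⟨hdiam, hdiam.mono (Nat.mul_le_mul_left 2 hsum)⟩

/-- A bridgeless connected graph with radius at most `r` in which every
edge lies on a cycle of length at most `η` admits an orientation of diameter at most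
`2 * ∑_{i=1}^{r} min (2i) (η-1)`; in particular, one of diameter at most `2r(η-1)`. -/
theorem oriented_diameter_bound [Fintype V] (G : SimpleGraph V)
    (hconn : G.Connected) (hbl : Bridgeless G)
    (r : ℕ) (hr : 1 ≤ r) (u : V) (hu : ∀ v : V, G.dist u v ≤ r)
    (η : ℕ) (hη : 3 ≤ η) (hcyc : ∀ e ∈ G.edgeSet, InCycleLE G e η) :
    OrientDiamLE G (2 * ∑ i ∈ Finset.Icc 1 r, min (2 * i) (η - 1)) ∧
      OrientDiamLE G (2 * (r * (η - 1))) :=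
  oriented_diameter_bound_general G hconn r u hu η hcyc
end

section
/- Let G be a finite bipartite graph with bipartition (V1, V2), where |V1| = n ≥ 1 and |V2| = m ≥ 1. Suppose there are integers k and r with k > ⌈m/2⌉ and r > ⌈n/2⌉ such that every vertex of V1 has degree at least k and every vertex of V2 has degree at least r. Then G admits an orientation of radius at most 9. -/
open SimpleGraph Finset

variable {V : Type*}

private lemma dp0 (o : V → V → Prop) (x : V) : DPathLE o 9 x x :=
  ⟨0, by omega, fun _ => x, rfl, rfl, fun i hi => absurd hi (by omega), fun i hi j hj _ => by omega⟩

private lemma dp1 {o : V → V → Prop} {v0 v1 : V} (h01 : o v0 v1) (n01 : v0 ≠ v1) :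
    DPathLE o 9 v0 v1 := by
  refine ⟨1, by omega, fun i => if i = 0 then v0 else v1, by simp, by simp, ?_, ?_⟩
  · intro i hi; interval_cases i; simpa using h01
  · intro i hi j hj hij; interval_cases i <;> interval_cases j <;> simp_all

private lemma dp2 {o : V → V → Prop} {v0 v1 v2 : V} (h01 : o v0 v1) (h12 : o v1 v2)
    (n01 : v0 ≠ v1) (n02 : v0 ≠ v2) (n12 : v1 ≠ v2) : DPathLE o 9 v0 v2 := by
  refine ⟨2, by omega, fun i => if i = 0 then v0 else if i = 1 then v1 else v2, by simp,
    by simp, ?_, ?_⟩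
  · intro i hi; interval_cases i <;> simpa using ‹_›
  · intro i hi j hj hij; interval_cases i <;> interval_cases j <;> simp_all

private lemma dp3 {o : V → V → Prop} {v0 v1 v2 v3 : V} (h01 : o v0 v1) (h12 : o v1 v2)
    (h23 : o v2 v3)
    (n01 : v0 ≠ v1) (n02 : v0 ≠ v2) (n03 : v0 ≠ v3) (n12 : v1 ≠ v2) (n13 : v1 ≠ v3)
    (n23 : v2 ≠ v3) : DPathLE o 9 v0 v3 := by
  refine ⟨3, by omega,
    fun i => if i = 0 then v0 else if i = 1 then v1 else if i = 2 then v2 else v3,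
    by simp, by simp, ?_, ?_⟩
  · intro i hi; interval_cases i <;> simpa using ‹_›
  · intro i hi j hj hij; interval_cases i <;> interval_cases j <;> simp_all

private lemma dp4 {o : V → V → Prop} {v0 v1 v2 v3 v4 : V} (h01 : o v0 v1) (h12 : o v1 v2)
    (h23 : o v2 v3) (h34 : o v3 v4)
    (n01 : v0 ≠ v1) (n02 : v0 ≠ v2) (n03 : v0 ≠ v3) (n04 : v0 ≠ v4) (n12 : v1 ≠ v2)
    (n13 : v1 ≠ v3) (n14 : v1 ≠ v4) (n23 : v2 ≠ v3) (n24 : v2 ≠ v4) (n34 : v3 ≠ v4) :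
    DPathLE o 9 v0 v4 := by
  refine ⟨4, by omega,
    fun i => if i = 0 then v0 else if i = 1 then v1 else if i = 2 then v2
      else if i = 3 then v3 else v4,
    by simp, by simp, ?_, ?_⟩
  · intro i hi; interval_cases i <;> simpa using ‹_›
  · intro i hi j hj hij; interval_cases i <;> interval_cases j <;> simp_all

/-- A bipartite graph with parts of sizes `n, m ≥ 1` in which every vertex of
`V1` has degree `≥ k > ⌈m/2⌉` and every vertex of `V2` has degree `≥ r > ⌈n/2⌉` admits an
orientation of radius at most `9`. -/
theorem bipartite_oriented_radius [Fintype V] (G : SimpleGraph V) [DecidableRel G.Adj]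
    (V1 V2 : Finset V) (hdisj : Disjoint V1 V2) (hcover : ∀ v : V, v ∈ V1 ∨ v ∈ V2)
    (hbip : ∀ x y : V, G.Adj x y → (x ∈ V1 ∧ y ∈ V2) ∨ (x ∈ V2 ∧ y ∈ V1))
    (n m : ℕ) (hn : V1.card = n) (hm : V2.card = m) (hn1 : 1 ≤ n) (hm1 : 1 ≤ m)
    (k r : ℕ) (hk : (m + 1) / 2 < k) (hr : (n + 1) / 2 < r)
    (hdeg1 : ∀ x ∈ V1, k ≤ G.degree x) (hdeg2 : ∀ y ∈ V2, r ≤ G.degree y) :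
    OrientRadiusLE G 9 := by
  classical
  have hnot2 : ∀ x ∈ V1, x ∉ V2 := fun x hx => Finset.disjoint_left.mp hdisj hx
  have hnot1 : ∀ x ∈ V2, x ∉ V1 := fun x hx => Finset.disjoint_right.mp hdisj hx
  have hside1 : ∀ x y : V, G.Adj x y → x ∈ V1 → y ∈ V2 := by
    intro x y h hx
    rcases hbip x y h with ⟨_, h2⟩ | ⟨h2, _⟩
    · exact h2
    · exact absurd hx (hnot1 x h2)
  have hside2 : ∀ x y : V, G.Adj x y → x ∈ V2 → y ∈ V1 := by
    intro x y h hx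
    rcases hbip x y h with ⟨h2, _⟩ | ⟨_, h2⟩
    · exact absurd hx (hnot2 x h2)
    · exact h2
  have hne12 : ∀ x ∈ V1, ∀ y ∈ V2, x ≠ y := by
    rintro x hx y hy rfl; exact hnot2 x hx hy
  have hk2 : 2 ≤ k := by omega
  have hr2 : 2 ≤ r := by omega
  have hcard1 : ∀ x ∈ V1, 2 ≤ (G.neighborFinset x).card := by
    intro x hx
    have := hdeg1 x hx
    rw [G.card_neighborFinset_eq_degree]
    omega
  have hsubV1 : ∀ y ∈ V2, G.neighborFinset y ⊆ V1 := by
    intro y hy z hz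
    exact hside2 y z ((G.mem_neighborFinset y _).mp hz) hy
  have hcommon : ∀ y ∈ V2, ∀ z ∈ V2,
      2 ≤ ((G.neighborFinset y) ∩ (G.neighborFinset z)).card := by
    intro y hy z hz
    have h1 := Finset.card_inter_add_card_union (G.neighborFinset y) (G.neighborFinset z)
    have h2 : (G.neighborFinset y ∪ G.neighborFinset z) ⊆ V1 :=
      Finset.union_subset (hsubV1 y hy) (hsubV1 z hz)
    have h3 : (G.neighborFinset y ∪ G.neighborFinset z).card ≤ n := by
      rw [← hn]; exact Finset.card_le_card h2
    have hyc : r ≤ (G.neighborFinset y).card := by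
      rw [G.card_neighborFinset_eq_degree]; exact hdeg2 y hy
    have hzc : r ≤ (G.neighborFinset z).card := by
      rw [G.card_neighborFinset_eq_degree]; exact hdeg2 z hz
    omega
  -- special vertices
  obtain ⟨u, hu1⟩ : V1.Nonempty := Finset.card_pos.mp (by omega)
  obtain ⟨a, ha, b, hb, hab⟩ := Finset.one_lt_card.mp
    (show 1 < (G.neighborFinset u).card by have := hcard1 u hu1; omega)
  have hAa : G.Adj u a := (G.mem_neighborFinset u _).mp ha
  have hAb : G.Adj u b := (G.mem_neighborFinset u _).mp hb
  have haV2 : a ∈ V2 := hside1 u a hAa hu1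
  have hbV2 : b ∈ V2 := hside1 u b hAb hu1
  -- a common neighbor of a and b, distinct from u
  obtain ⟨w, hw, hwu⟩ := Finset.exists_mem_ne
    (show 1 < ((G.neighborFinset a) ∩ (G.neighborFinset b)).card by
      have := hcommon a haV2 b hbV2; omega) u
  rw [Finset.mem_inter] at hw
  have hwa : G.Adj a w := (G.mem_neighborFinset a _).mp hw.1
  have hwb : G.Adj b w := (G.mem_neighborFinset b _).mp hw.2
  have hwV1 : w ∈ V1 := hside2 a w hwa haV2
  -- in-representatives
  have H1 : ∀ y : V, ∃ s : V, y ∈ V2 → G.Adj y s ∧ G.Adj a s ∧ s ≠ u := by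
    intro y
    by_cases hy : y ∈ V2
    · obtain ⟨s, hs, hsu⟩ := Finset.exists_mem_ne
        (show 1 < ((G.neighborFinset y) ∩ (G.neighborFinset a)).card by
          have := hcommon y hy a haV2; omega) u
      rw [Finset.mem_inter] at hs
      exact ⟨s, fun _ => ⟨(G.mem_neighborFinset y _).mp hs.1,
        (G.mem_neighborFinset a _).mp hs.2, hsu⟩⟩
    · exact ⟨u, fun h => absurd h hy⟩
  choose sIn hsIn using H1
  -- out-representatives
  have H2 : ∀ y : V, ∃ s : V, y ∈ V2 →
      G.Adj y s ∧ G.Adj b s ∧ s ≠ u ∧ (¬ G.Adj u y → s ≠ sIn y) := by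
    intro y
    by_cases hy : y ∈ V2
    · by_cases h : (((G.neighborFinset y ∩ G.neighborFinset b).erase u).erase (sIn y)).Nonempty
      · obtain ⟨s, hs⟩ := h
        have h1 := Finset.ne_of_mem_erase hs
        have h2 := Finset.mem_of_mem_erase hs
        have h3 := Finset.ne_of_mem_erase h2
        have h4 := Finset.mem_of_mem_erase h2
        rw [Finset.mem_inter] at h4
        exact ⟨s, fun _ => ⟨(G.mem_neighborFinset y _).mp h4.1,
          (G.mem_neighborFinset b _).mp h4.2, h3, fun _ => h1⟩⟩
      · have hScard : 2 ≤ (G.neighborFinset y ∩ G.neighborFinset b).card :=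
          hcommon y hy b hbV2
        obtain ⟨s, hs, hsu⟩ := Finset.exists_mem_ne
          (show 1 < (G.neighborFinset y ∩ G.neighborFinset b).card by omega) u
        have hempty : ((G.neighborFinset y ∩ G.neighborFinset b).erase u).erase (sIn y) = ∅ :=
          Finset.not_nonempty_iff_eq_empty.mp h
        have key : ∀ z ∈ G.neighborFinset y ∩ G.neighborFinset b, z ≠ u → z = sIn y := by
          intro z hz hzu
          by_contra hne
          have hmem : z ∈ ((G.neighborFinset y ∩ G.neighborFinset b).erase u).erase (sIn y) :=
            Finset.mem_erase.mpr ⟨hne, Finset.mem_erase.mpr ⟨hzu, hz⟩⟩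
          rw [hempty] at hmem
          exact absurd hmem (Finset.notMem_empty z)
        have hs' := hs
        rw [Finset.mem_inter] at hs'
        refine ⟨s, fun _ => ⟨(G.mem_neighborFinset y _).mp hs'.1,
          (G.mem_neighborFinset b _).mp hs'.2, hsu, ?_⟩⟩
        intro hnadj
        exfalso
        obtain ⟨z1, hz1, z2, hz2, hz12⟩ := Finset.one_lt_card.mp
          (show 1 < (G.neighborFinset y ∩ G.neighborFinset b).card by omega)
        have hu_mem : u ∈ G.neighborFinset y ∩ G.neighborFinset b := by
          by_contra huin
          have e1 : z1 = sIn y := key z1 hz1 (by rintro rfl; exact huin hz1)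
          have e2 : z2 = sIn y := key z2 hz2 (by rintro rfl; exact huin hz2)
          exact hz12 (e1.trans e2.symm)
        rw [Finset.mem_inter] at hu_mem
        exact hnadj ((G.mem_neighborFinset y _).mp hu_mem.1).symm
    · exact ⟨u, fun h => absurd h hy⟩
  choose sOut hsOut using H2
  -- escape representatives
  have H3 : ∀ x : V, ∃ z : V, x ∈ V1 → G.Adj x z := by
    intro x
    by_cases hx : x ∈ V1
    · have h2 := hcard1 x hx
      obtain ⟨z, hz⟩ := Finset.card_pos.mp (show 0 < (G.neighborFinset x).card by omega)
      exact ⟨z, fun _ => (G.mem_neighborFinset x _).mp hz⟩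
    · exact ⟨u, fun h => absurd h hx⟩
  choose t ht using H3
  -- the orientation rule (given for the V1-endpoint of each edge)
  obtain ⟨F, hF⟩ : ∃ F : V → V → Prop, ∀ x y : V, F x y ↔
      (if x = u then y ≠ b else if y = a then False else if y = b then True
       else if x = sOut y then False else if x = sIn y then True
       else if G.Adj x a then True else if G.Adj x b then False else y = t x) :=
    ⟨_, fun _ _ => Iff.rfl⟩
  have hF1 : ∀ y : V, y ≠ b → F u y := by
    intro y h; rw [hF, if_pos rfl]; exact h
  have hF2 : ¬ F u b := by
    rw [hF, if_pos rfl]; exact fun h => h rfl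
  have hF3 : ∀ x : V, x ≠ u → ¬ F x a := by
    intro x hx
    rw [hF, if_neg hx, if_pos rfl]
    exact not_false
  have hF4 : ∀ x : V, x ≠ u → F x b := by
    intro x hx
    rw [hF, if_neg hx, if_neg (show ¬ (b = a) from fun hh => hab hh.symm), if_pos rfl]
    trivial
  have hF5 : ∀ y : V, y ∈ V2 → y ≠ a → y ≠ b → ¬ F (sOut y) y := by
    intro y hy ha' hb'
    rw [hF, if_neg (hsOut y hy).2.2.1, if_neg ha', if_neg hb', if_pos rfl]
    exact not_false
  have hF6 : ∀ y : V, y ∈ V2 → y ≠ a → y ≠ b → ¬ G.Adj u y → F (sIn y) y := by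
    intro y hy ha' hb' hnadj
    have h2 : sOut y ≠ sIn y := (hsOut y hy).2.2.2 hnadj
    rw [hF, if_neg (hsIn y hy).2.2, if_neg ha', if_neg hb',
      if_neg (show ¬ (sIn y = sOut y) from fun hh => h2 hh.symm), if_pos rfl]
    trivial
  have hF7 : ∀ x y : V, x ≠ u → y ≠ a → y ≠ b → x ≠ sOut y → G.Adj x a → F x y := by
    intro x y hx ha' hb' hso hadj
    rw [hF, if_neg hx, if_neg ha', if_neg hb', if_neg hso]
    by_cases h : x = sIn y
    · rw [if_pos h]; trivial
    · rw [if_neg h, if_pos hadj]; trivial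
  have hF8 : ∀ x y : V, x ≠ u → y ≠ a → y ≠ b → x ≠ sIn y → ¬ G.Adj x a → G.Adj x b →
      ¬ F x y := by
    intro x y hx ha' hb' hsi hna hb2
    rw [hF, if_neg hx, if_neg ha', if_neg hb']
    by_cases h : x = sOut y
    · rw [if_pos h]; exact not_false
    · rw [if_neg h, if_neg hsi, if_neg hna, if_pos hb2]; exact not_false
  have hF9 : ∀ x y : V, x ≠ u → y ≠ a → y ≠ b → x ≠ sOut y → x ≠ sIn y → ¬ G.Adj x a →
      ¬ G.Adj x b → (F x y ↔ y = t x) := by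
    intro x y hx ha' hb' hso hsi hna hnb
    rw [hF, if_neg hx, if_neg ha', if_neg hb', if_neg hso, if_neg hsi, if_neg hna, if_neg hnb]
  -- the orientation
  obtain ⟨o, hoI⟩ : ∃ o : V → V → Prop, ∀ x y : V,
      o x y ↔ (G.Adj x y ∧ ((x ∈ V1 ∧ F x y) ∨ (x ∈ V2 ∧ ¬ F y x))) := ⟨_, fun _ _ => Iff.rfl⟩
  have hofwd : ∀ x y : V, x ∈ V1 → G.Adj x y → F x y → o x y := fun x y h1 h2 h3 =>
    (hoI x y).mpr ⟨h2, Or.inl ⟨h1, h3⟩⟩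
  have hobwd : ∀ x y : V, x ∈ V1 → G.Adj x y → ¬ F x y → o y x := fun x y h1 h2 h3 =>
    (hoI y x).mpr ⟨h2.symm, Or.inr ⟨hside1 x y h2 h1, h3⟩⟩
  -- particular directed edges
  have houa : o u a := hofwd u a hu1 hAa (hF1 a hab)
  have hobu : o b u := hobwd u b hu1 hAb hF2
  have hoax : ∀ x : V, x ≠ u → G.Adj a x → o a x := fun x hx hadj =>
    hobwd x a (hside2 a x hadj haV2) hadj.symm (hF3 x hx)
  have hoxb : ∀ x : V, x ≠ u → G.Adj x b → o x b := fun x hx hadj =>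
    hofwd x b (hside2 b x hadj.symm hbV2) hadj (hF4 x hx)
  have hosouty : ∀ y : V, y ∈ V2 → y ≠ a → y ≠ b → o y (sOut y) := fun y hy h1 h2 =>
    hobwd (sOut y) y (hside2 y (sOut y) (hsOut y hy).1 hy) (hsOut y hy).1.symm
      (hF5 y hy h1 h2)
  have hosiny : ∀ y : V, y ∈ V2 → y ≠ a → y ≠ b → ¬ G.Adj u y → o (sIn y) y :=
    fun y hy h1 h2 h3 =>
    hofwd (sIn y) y (hside2 y (sIn y) (hsIn y hy).1 hy) (hsIn y hy).1.symm
      (hF6 y hy h1 h2 h3)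
  have hoasin : ∀ y : V, y ∈ V2 → o a (sIn y) := fun y hy =>
    hoax (sIn y) (hsIn y hy).2.2 (hsIn y hy).2.1
  have hosoutb : ∀ y : V, y ∈ V2 → o (sOut y) b := fun y hy =>
    hoxb (sOut y) (hsOut y hy).2.2.1 (hsOut y hy).2.1.symm
  have houy : ∀ y : V, y ≠ b → G.Adj u y → o u y := fun y h1 h2 =>
    hofwd u y hu1 h2 (hF1 y h1)
  refine ⟨o, ⟨?_, ?_, ?_⟩, u, ?_⟩
  · intro x y h; exact ((hoI x y).mp h).1
  · intro x y h
    rcases hbip x y h with ⟨hx, _⟩ | ⟨_, hy⟩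
    · by_cases hf : F x y
      · exact Or.inl (hofwd x y hx h hf)
      · exact Or.inr (hobwd x y hx h hf)
    · by_cases hf : F y x
      · exact Or.inr (hofwd y x hy h.symm hf)
      · exact Or.inl (hobwd y x hy h.symm hf)
  · intro x y h1 h2
    obtain ⟨hadj, hc⟩ := (hoI x y).mp h1
    obtain ⟨_, hc'⟩ := (hoI y x).mp h2
    rcases hc with ⟨hx1, hf⟩ | ⟨hx2, hnf⟩ <;> rcases hc' with ⟨hy1, hf'⟩ | ⟨hy2, hnf'⟩
    · exact absurd (hside1 x y hadj hx1) (hnot2 y hy1)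
    · exact hnf' hf
    · exact hnf hf'
    · exact absurd hy2 (hnot2 y (hside2 x y hadj hx2))
  · intro v
    rcases hcover v with hv1 | hv2
    · -- v ∈ V1
      by_cases hvu : v = u
      · subst hvu; exact ⟨dp0 o v, dp0 o v⟩
      constructor
      · -- from u to v
        by_cases hva : G.Adj v a
        · exact dp2 houa (hoax v hvu hva.symm) (hne12 u hu1 a haV2) (Ne.symm hvu)
            (Ne.symm (hne12 v hv1 a haV2))
        · have hnva : ¬ G.Adj a v := fun h => hva h.symm
          have hgety : ∃ y : V, G.Adj v y ∧ y ≠ a ∧ y ≠ b ∧ o y v := by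
            by_cases hvb : G.Adj v b
            · obtain ⟨y, hy, hyb⟩ := Finset.exists_mem_ne
                (show 1 < (G.neighborFinset v).card by have := hcard1 v hv1; omega) b
              have hadj : G.Adj v y := (G.mem_neighborFinset v _).mp hy
              have hyV2 : y ∈ V2 := hside1 v y hadj hv1
              have hya : y ≠ a := by rintro rfl; exact hva hadj
              have hvsin : v ≠ sIn y := by
                intro hh; apply hva; rw [hh]; exact (hsIn y hyV2).2.1.symm
              exact ⟨y, hadj, hya, hyb,
                hobwd v y hv1 hadj (hF8 v y hvu hya hyb hvsin hva hvb)⟩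
            · obtain ⟨y, hy, hyt⟩ := Finset.exists_mem_ne
                (show 1 < (G.neighborFinset v).card by have := hcard1 v hv1; omega) (t v)
              have hadj : G.Adj v y := (G.mem_neighborFinset v _).mp hy
              have hyV2 : y ∈ V2 := hside1 v y hadj hv1
              have hya : y ≠ a := by rintro rfl; exact hva hadj
              have hyb : y ≠ b := by rintro rfl; exact hvb hadj
              have hvsin : v ≠ sIn y := by
                intro hh; apply hva; rw [hh]; exact (hsIn y hyV2).2.1.symm
              have hvsout : v ≠ sOut y := by
                intro hh; apply hvb; rw [hh]; exact (hsOut y hyV2).2.1.symm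
              have hnF : ¬ F v y := by
                rw [hF9 v y hvu hya hyb hvsout hvsin hva hvb]
                exact hyt
              exact ⟨y, hadj, hya, hyb, hobwd v y hv1 hadj hnF⟩
          obtain ⟨y, hadj, hya, hyb, hoyv⟩ := hgety
          have hyV2 : y ∈ V2 := hside1 v y hadj hv1
          by_cases huy : G.Adj u y
          · exact dp2 (houy y hyb huy) hoyv (hne12 u hu1 y hyV2) (Ne.symm hvu)
              (Ne.symm (hne12 v hv1 y hyV2))
          · have hsi := hsIn y hyV2
            have hsiV1 : sIn y ∈ V1 := hside2 y (sIn y) hsi.1 hyV2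
            have hsinv : sIn y ≠ v := by
              intro hh; apply hnva; rw [← hh]; exact hsi.2.1
            exact dp4 houa (hoasin y hyV2) (hosiny y hyV2 hya hyb huy) hoyv
              (hne12 u hu1 a haV2) (Ne.symm hsi.2.2) (hne12 u hu1 y hyV2) (Ne.symm hvu)
              (Ne.symm (hne12 (sIn y) hsiV1 a haV2)) (Ne.symm hya)
              (Ne.symm (hne12 v hv1 a haV2)) (hne12 (sIn y) hsiV1 y hyV2) hsinv
              (Ne.symm (hne12 v hv1 y hyV2))
      · -- from v to u
        by_cases hvb : G.Adj v b
        · exact dp2 (hoxb v hvu hvb) hobu (hne12 v hv1 b hbV2) hvu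
            (Ne.symm (hne12 u hu1 b hbV2))
        · have hgety : ∃ y : V, G.Adj v y ∧ y ≠ a ∧ y ≠ b ∧ o v y := by
            by_cases hva : G.Adj v a
            · obtain ⟨y, hy, hya⟩ := Finset.exists_mem_ne
                (show 1 < (G.neighborFinset v).card by have := hcard1 v hv1; omega) a
              have hadj : G.Adj v y := (G.mem_neighborFinset v _).mp hy
              have hyV2 : y ∈ V2 := hside1 v y hadj hv1
              have hyb : y ≠ b := by rintro rfl; exact hvb hadj
              have hvsout : v ≠ sOut y := by
                intro hh; apply hvb; rw [hh]; exact (hsOut y hyV2).2.1.symm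
              exact ⟨y, hadj, hya, hyb,
                hofwd v y hv1 hadj (hF7 v y hvu hya hyb hvsout hva)⟩
            · have hadj : G.Adj v (t v) := ht v hv1
              have htV2 : t v ∈ V2 := hside1 v (t v) hadj hv1
              have h1 : t v ≠ a := by rintro hh; apply hva; rw [← hh]; exact hadj
              have h2 : t v ≠ b := by rintro hh; apply hvb; rw [← hh]; exact hadj
              have hvsout : v ≠ sOut (t v) := by
                intro hh; apply hvb; rw [hh]; exact (hsOut (t v) htV2).2.1.symm
              have hvsin : v ≠ sIn (t v) := by
                intro hh; apply hva; rw [hh]; exact (hsIn (t v) htV2).2.1.symm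
              exact ⟨t v, hadj, h1, h2, hofwd v (t v) hv1 hadj
                ((hF9 v (t v) hvu h1 h2 hvsout hvsin hva hvb).mpr rfl)⟩
          obtain ⟨y, hadj, hya, hyb, hovy⟩ := hgety
          have hyV2 : y ∈ V2 := hside1 v y hadj hv1
          have hvsout : v ≠ sOut y := by
            intro hh; apply hvb; rw [hh]; exact (hsOut y hyV2).2.1.symm
          have hsoV1 : sOut y ∈ V1 := hside2 y (sOut y) (hsOut y hyV2).1 hyV2
          exact dp4 hovy (hosouty y hyV2 hya hyb) (hosoutb y hyV2) hobu
            (hne12 v hv1 y hyV2) hvsout (hne12 v hv1 b hbV2) hvu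
            (Ne.symm (hne12 (sOut y) hsoV1 y hyV2)) hyb
            (Ne.symm (hne12 u hu1 y hyV2)) (hne12 (sOut y) hsoV1 b hbV2)
            (hsOut y hyV2).2.2.1 (Ne.symm (hne12 u hu1 b hbV2))
    · -- v ∈ V2
      constructor
      · -- from u to v
        by_cases hva : v = a
        · subst hva; exact dp1 houa (hne12 u hu1 v hv2)
        by_cases hvb : v = b
        · subst hvb
          exact dp3 houa (hoax w hwu hwa) (hoxb w hwu hwb.symm) (hne12 u hu1 a haV2)
            (Ne.symm hwu) (hne12 u hu1 v hv2) (Ne.symm (hne12 w hwV1 a haV2)) hab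
            (hne12 w hwV1 v hv2)
        by_cases huv : G.Adj u v
        · exact dp1 (houy v hvb huv) (hne12 u hu1 v hv2)
        · have hsi := hsIn v hv2
          have hsiV1 : sIn v ∈ V1 := hside2 v (sIn v) hsi.1 hv2
          exact dp3 houa (hoasin v hv2) (hosiny v hv2 hva hvb huv)
            (hne12 u hu1 a haV2) (Ne.symm hsi.2.2) (hne12 u hu1 v hv2)
            (Ne.symm (hne12 (sIn v) hsiV1 a haV2)) (Ne.symm hva)
            (hne12 (sIn v) hsiV1 v hv2)
      · -- from v to u
        by_cases hvb : v = b
        · subst hvb; exact dp1 hobu (Ne.symm (hne12 u hu1 v hv2))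
        by_cases hva : v = a
        · subst hva
          exact dp3 (hoax w hwu hwa) (hoxb w hwu hwb.symm) hobu
            (Ne.symm (hne12 w hwV1 v hv2)) (show v ≠ b from hvb)
            (Ne.symm (hne12 u hu1 v hv2)) (hne12 w hwV1 b hbV2) hwu
            (Ne.symm (hne12 u hu1 b hbV2))
        · have hsoV1 : sOut v ∈ V1 := hside2 v (sOut v) (hsOut v hv2).1 hv2
          exact dp3 (hosouty v hv2 hva hvb) (hosoutb v hv2) hobu
            (Ne.symm (hne12 (sOut v) hsoV1 v hv2)) (show v ≠ b from hvb)
            (Ne.symm (hne12 u hu1 v hv2)) (hne12 (sOut v) hsoV1 b hbV2)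
            (hsOut v hv2).2.2.1 (Ne.symm (hne12 u hu1 b hbV2))
end

section
/- Let G be a finite bipartite graph with bipartition (V1, V2), where |V1| = n ≥ 1 and |V2| = m ≥ 1. Suppose there are integers k and r with k > ⌈m/2⌉ and r > ⌈n/2⌉ such that every vertex of V1 has degree at least k and every vertex of V2 has degree at least r. Then every edge of G is contained in a cycle of length 4; in particular η(G) ≤ 4. -/
open SimpleGraph Finset

variable {V : Type*}

lemma four_cycle_aux {G : SimpleGraph V} {x y x' y' : V}
    (hxy : G.Adj x y) (hyx' : G.Adj y x') (hx'y' : G.Adj x' y') (hy'x : G.Adj y' x)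
    (hxx' : x ≠ x') (hyy' : y ≠ y') :
    ∃ c : G.Walk x x, c.IsCycle ∧ s(x, y) ∈ c.edges ∧ c.length = 4 := by
  refine ⟨.cons hxy (.cons hyx' (.cons hx'y' (.cons hy'x .nil))), ?_, by simp, rfl⟩
  constructor
  · constructor
    · simp [SimpleGraph.Walk.isTrail_def, List.nodup_cons, Sym2.eq, Sym2.rel_iff',
        hxy.ne, hyx'.ne, hx'y'.ne, hy'x.ne, hxx', hyy', hxx'.symm, hyy'.symm,
        hxy.ne', hyx'.ne', hx'y'.ne', hy'x.ne']
    · simp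
  · simp only [SimpleGraph.Walk.support_cons, SimpleGraph.Walk.support_nil, List.tail_cons,
      List.nodup_cons, List.mem_cons, List.not_mem_nil, or_false, List.mem_singleton,
      List.nodup_nil, and_true, not_or]
    exact ⟨⟨hyx'.ne, hyy', hxy.ne'⟩, ⟨hx'y'.ne, hxx'.symm⟩, hy'x.ne, not_false⟩

lemma main_aux [Fintype V] (G : SimpleGraph V) [DecidableRel G.Adj]
    (V1 V2 : Finset V) (hdisj : Disjoint V1 V2)
    (hbip : ∀ x y : V, G.Adj x y → (x ∈ V1 ∧ y ∈ V2) ∨ (x ∈ V2 ∧ y ∈ V1))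
    (n m : ℕ) (hn : V1.card = n) (hm : V2.card = m) (hn1 : 1 ≤ n)
    (k r : ℕ) (hk : (m + 1) / 2 < k) (hr : (n + 1) / 2 < r)
    (hdeg1 : ∀ x ∈ V1, k ≤ G.degree x) (hdeg2 : ∀ y ∈ V2, r ≤ G.degree y)
    {x y : V} (hxy : G.Adj x y) (hx1 : x ∈ V1) (hy2 : y ∈ V2) :
    ∃ c : G.Walk x x, c.IsCycle ∧ s(x, y) ∈ c.edges ∧ c.length = 4 := by
  classical
  -- neighbors of V1-vertices lie in V2
  have hnbr1 : ∀ z ∈ V1, G.neighborFinset z ⊆ V2 := by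
    intro z hz w hw
    rw [mem_neighborFinset] at hw
    rcases hbip z w hw with ⟨_, h⟩ | ⟨h, _⟩
    · exact h
    · exact absurd hz (Finset.disjoint_left.mp hdisj.symm h)
  -- pick x' ∈ N(y), x' ≠ x
  have hr2 : 2 ≤ r := by omega
  have hcard_y : 1 < (G.neighborFinset y).card := by
    have := hdeg2 y hy2
    rw [← G.card_neighborFinset_eq_degree] at this
    omega
  obtain ⟨x', hx'mem, hx'ne⟩ := Finset.exists_mem_ne hcard_y x
  rw [mem_neighborFinset] at hx'mem
  have hx'1 : x' ∈ V1 := by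
    rcases hbip y x' hx'mem with ⟨h, _⟩ | ⟨_, h⟩
    · exact absurd h (Finset.disjoint_right.mp hdisj hy2)
    · exact h
  -- intersection of neighborhoods of x and x'
  have hsub : G.neighborFinset x ∪ G.neighborFinset x' ⊆ V2 :=
    Finset.union_subset (hnbr1 x hx1) (hnbr1 x' hx'1)
  have hinter : 1 < (G.neighborFinset x ∩ G.neighborFinset x').card := by
    have h1 := hdeg1 x hx1
    have h2 := hdeg1 x' hx'1
    rw [← G.card_neighborFinset_eq_degree] at h1 h2
    have hu : (G.neighborFinset x ∪ G.neighborFinset x').card ≤ m := by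
      rw [← hm]; exact Finset.card_le_card hsub
    have := Finset.card_inter_add_card_union (G.neighborFinset x) (G.neighborFinset x')
    omega
  obtain ⟨y', hy'mem, hy'ne⟩ := Finset.exists_mem_ne hinter y
  rw [Finset.mem_inter, mem_neighborFinset, mem_neighborFinset] at hy'mem
  exact four_cycle_aux hxy hx'mem hy'mem.2 hy'mem.1.symm (Ne.symm hx'ne) (Ne.symm hy'ne)

/-- In a bipartite graph with parts of sizes `n, m ≥ 1` in which every vertex
of `V1` has degree `≥ k > ⌈m/2⌉` and every vertex of `V2` has degree `≥ r > ⌈n/2⌉`, every edge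
lies on a cycle of length `4`; in particular `η(G) ≤ 4`. -/
theorem bipartite_edge_in_four_cycle [Fintype V] (G : SimpleGraph V) [DecidableRel G.Adj]
    (V1 V2 : Finset V) (hdisj : Disjoint V1 V2) (hcover : ∀ v : V, v ∈ V1 ∨ v ∈ V2)
    (hbip : ∀ x y : V, G.Adj x y → (x ∈ V1 ∧ y ∈ V2) ∨ (x ∈ V2 ∧ y ∈ V1))
    (n m : ℕ) (hn : V1.card = n) (hm : V2.card = m) (hn1 : 1 ≤ n) (hm1 : 1 ≤ m)
    (k r : ℕ) (hk : (m + 1) / 2 < k) (hr : (n + 1) / 2 < r)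
    (hdeg1 : ∀ x ∈ V1, k ≤ G.degree x) (hdeg2 : ∀ y ∈ V2, r ≤ G.degree y) :
    (∀ e ∈ G.edgeSet, ∃ (v : V) (c : G.Walk v v), c.IsCycle ∧ e ∈ c.edges ∧ c.length = 4) ∧
      ∀ e ∈ G.edgeSet, InCycleLE G e 4 := by
  have key : ∀ e ∈ G.edgeSet, ∃ (v : V) (c : G.Walk v v), c.IsCycle ∧ e ∈ c.edges ∧ c.length = 4 := by
    intro e he
    induction e using Sym2.ind with
    | _ a b =>
      rw [mem_edgeSet] at he
      rcases hbip a b he with ⟨ha, hb⟩ | ⟨ha, hb⟩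
      · obtain ⟨c, hc⟩ := main_aux G V1 V2 hdisj hbip n m hn hm hn1 k r hk hr hdeg1 hdeg2 he ha hb
        exact ⟨a, c, hc⟩
      · obtain ⟨c, hc1, hc2, hc3⟩ :=
          main_aux G V1 V2 hdisj hbip n m hn hm hn1 k r hk hr hdeg1 hdeg2 he.symm hb ha
        exact ⟨b, c, hc1, by rwa [Sym2.eq_swap], hc3⟩
  exact ⟨key, fun e he => by
    obtain ⟨v, c, h1, h2, h3⟩ := key e he; exact ⟨v, c, h1, h2, h3.le⟩⟩
end

section
/- Let G be a finite graph on n vertices with minimum degree δ(G) > n/2 (equivalently, 2δ(G) > n). Then G admits an orientation of radius at most 4 and an orientation of diameter at most 8. -/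
open SimpleGraph Finset

variable {V : Type*}

/-!
Fix an edge `uw`. Since `2δ(G) > n`, any two vertices have a common neighbour, and two distinct
non-adjacent vertices have at least three. Orient `w → u`, `u → N(u)`, `N(w) → w` and
`N(u) \ N(w) → N(u) ∩ N(w) → N(w) \ N(u)`; a vertex `v` adjacent to neither `u` nor `w` gets an
arc from a common neighbour with `u` and one to a different common neighbour with `w`. These
prescribed arcs never conflict, and the remaining edges are oriented arbitrarily. Then `u` reaches
every vertex in at most two steps and is reached from every vertex in at most three; routing
through `u` bounds the diameter.
-/

namespace DPathLE

variable {o : V → V → Prop} {m n : ℕ} {x y z : V}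

theorem mono_s12 (h : DPathLE o m x y) (hmn : m ≤ n) : DPathLE o n x y := by
  obtain ⟨k, hk, f, hf⟩ := h
  exact ⟨k, hk.trans hmn, f, hf⟩

theorem refl (x : V) : DPathLE o n x x :=
  ⟨0, n.zero_le, fun _ => x, rfl, rfl, by omega, by omega⟩

theorem cons (hxy : o x y) (h : DPathLE o n y z) : DPathLE o (n + 1) x z := by
  obtain ⟨m, hm, f, rfl, rfl, hwalk, hinj⟩ := h
  -- if `x` already lies on the path, cut the path at `x` instead of prepending the arc
  by_cases hx : ∃ i ≤ m, f i = x
  · obtain ⟨i, hi, rfl⟩ := hx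
    refine ⟨m - i, by omega, fun k => f (k + i), by simp, by simp [Nat.sub_add_cancel hi],
      fun k hk => ?_, fun k hk l hl hkl => ?_⟩
    · simpa only [Nat.add_right_comm] using hwalk (k + i) (by omega)
    · have := hinj _ (by omega) _ (by omega) hkl
      omega
  · push Not at hx
    refine ⟨m + 1, by omega, fun | 0 => x | k + 1 => f k, rfl, rfl,
      fun k hk => ?_, fun k hk l hl hkl => ?_⟩
    · cases k with
      | zero => exact hxy
      | succ k => exact hwalk k (by omega)
    · cases k <;> cases l
      · rfl
      · exact absurd hkl.symm (hx _ (by omega))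
      · exact absurd hkl (hx _ (by omega))
      · exact congrArg (· + 1) (hinj _ (by omega) _ (by omega) hkl)

theorem single (hxy : o x y) : DPathLE o 1 x y :=
  cons hxy (refl y)

theorem of_walk {f : ℕ → V} (hwalk : ∀ i < m, o (f i) (f (i + 1)))
    (h : DPathLE o n (f m) z) : DPathLE o (m + n) (f 0) z := by
  induction m generalizing f with
  | zero => simpa using h
  | succ m ih =>
    have := cons (hwalk 0 m.succ_pos)
      (ih (f := fun i => f (i + 1)) (fun i hi => hwalk (i + 1) (by omega)) h)
    rwa [Nat.succ_add]

theorem trans (hxy : DPathLE o m x y) (hyz : DPathLE o n y z) : DPathLE o (m + n) x z := by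
  obtain ⟨k, hk, f, rfl, rfl, hwalk, -⟩ := hxy
  exact (of_walk hwalk hyz).mono_s12 (by omega)

end DPathLE

theorem OrientRadiusLE.orientDiamLE {G : SimpleGraph V} {R : ℕ} (h : OrientRadiusLE G R) :
    OrientDiamLE G (R + R) := by
  obtain ⟨o, ho, u, hu⟩ := h
  exact ⟨o, ho, fun x y => (hu x).2.trans (hu y).1⟩

theorem exists_isOrientation_of_asymm (G : SimpleGraph V) {D : V → V → Prop}
    (hD : ∀ x y, G.Adj x y → D x y → ¬ D y x) :
    ∃ o, IsOrientation G o ∧ ∀ x y, G.Adj x y → D x y → o x y := by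
  let r := WellOrderingRel (α := V)
  refine ⟨fun x y => G.Adj x y ∧ (D x y ∨ ¬ D y x ∧ r x y), ⟨fun x y h => h.1, ?_, ?_⟩,
    fun x y hxy h => ⟨hxy, .inl h⟩⟩
  · intro x y hxy
    rcases trichotomous_of r x y with hr | rfl | hr
    · by_cases D y x <;> tauto
    · exact absurd hxy G.irrefl
    · by_cases D x y <;> tauto
  · rintro x y ⟨hxy, hxy' | ⟨hyx, hr⟩⟩ ⟨-, hyx' | ⟨hxy'', hr'⟩⟩
    · exact hD x y hxy hxy' hyx'
    · exact hxy'' hxy'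
    · exact hyx hyx'
    · exact asymm hr hr'

section CommonNeighbors

variable [Fintype V] {G : SimpleGraph V} [DecidableRel G.Adj]

theorem two_mul_minDegree_le_card_add_card_inter [DecidableEq V] (x y : V) :
    2 * G.minDegree ≤ Fintype.card V + #(G.neighborFinset x ∩ G.neighborFinset y) := by
  have := card_inter_add_card_union (G.neighborFinset x) (G.neighborFinset y)
  have := card_le_univ (G.neighborFinset x ∪ G.neighborFinset y)
  have := G.card_neighborFinset_eq_degree x ▸ G.minDegree_le_degree x
  have := G.card_neighborFinset_eq_degree y ▸ G.minDegree_le_degree y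
  omega

theorem two_mul_minDegree_add_two_le_card_add_card_inter [DecidableEq V] {x y : V} (hxy : x ≠ y)
    (hadj : ¬ G.Adj x y) :
    2 * G.minDegree + 2 ≤ Fintype.card V + #(G.neighborFinset x ∩ G.neighborFinset y) := by
  have hsub : G.neighborFinset x ∪ G.neighborFinset y ⊆ {x, y}ᶜ := by
    intro c
    simp only [mem_union, mem_neighborFinset, mem_compl, mem_insert, mem_singleton]
    rintro (h | h) (rfl | rfl) <;> simp_all [G.adj_comm]
  have := card_le_card hsub
  have := card_compl_add_card ({x, y} : Finset V)
  rw [card_pair hxy] at this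
  have := card_inter_add_card_union (G.neighborFinset x) (G.neighborFinset y)
  have := G.card_neighborFinset_eq_degree x ▸ G.minDegree_le_degree x
  have := G.card_neighborFinset_eq_degree y ▸ G.minDegree_le_degree y
  omega

variable (h : Fintype.card V < 2 * G.minDegree)
include h

theorem exists_adj_adj_of_card_lt_two_mul_minDegree (x y : V) : ∃ c, G.Adj x c ∧ G.Adj y c := by
  classical
  have := two_mul_minDegree_le_card_add_card_inter (G := G) x y
  obtain ⟨c, hc⟩ := card_pos.mp (show 0 < #(G.neighborFinset x ∩ G.neighborFinset y) by omega)
  exact ⟨c, by simpa using hc⟩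

theorem exists_adj_adj_ne_of_card_lt_two_mul_minDegree {x y : V} (hxy : x ≠ y)
    (hadj : ¬ G.Adj x y) (z : V) : ∃ c, G.Adj x c ∧ G.Adj y c ∧ c ≠ z := by
  classical
  have := two_mul_minDegree_add_two_le_card_add_card_inter hxy hadj
  obtain ⟨c, hc, hcz⟩ := exists_mem_ne (show 1 < #(G.neighborFinset x ∩ G.neighborFinset y) by
    omega) z
  simp only [mem_inter, mem_neighborFinset] at hc
  exact ⟨c, hc.1, hc.2, hcz⟩

end CommonNeighbors

section EdgeRootedOrientation

variable {G : SimpleGraph V} {u w : V} {iv ov : V → V}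

/-- The arcs that the orientation rooted at the edge `uw` must contain; `iv v` and `ov v` are the
in- and out-neighbour prescribed for a vertex `v` adjacent to neither `u` nor `w`. -/
inductive EdgeRootedArc (G : SimpleGraph V) (u w : V) (iv ov : V → V) : V → V → Prop
  | back : EdgeRootedArc G u w iv ov w u
  | fromU {y : V} : y ≠ w → EdgeRootedArc G u w iv ov u y
  | toW {x : V} : x ≠ u → EdgeRootedArc G u w iv ov x w
  | layer {x y : V} : G.Adj u x → x ≠ w → G.Adj w y → y ≠ u →
      (¬ G.Adj w x ∨ ¬ G.Adj u y) → EdgeRootedArc G u w iv ov x y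
  | farIn {y : V} : ¬ G.Adj u y → ¬ G.Adj w y → EdgeRootedArc G u w iv ov (iv y) y
  | farOut {x : V} : ¬ G.Adj u x → ¬ G.Adj w x → EdgeRootedArc G u w iv ov x (ov x)

variable (huw : G.Adj u w)
  (hsel : ∀ v, ¬ G.Adj u v → ¬ G.Adj w v →
    G.Adj v (iv v) ∧ G.Adj u (iv v) ∧ G.Adj v (ov v) ∧ G.Adj w (ov v) ∧ iv v ≠ ov v)
include huw hsel

theorem EdgeRootedArc.asymm {x y : V} (hxy : G.Adj x y) (h : EdgeRootedArc G u w iv ov x y) :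
    ¬ EdgeRootedArc G u w iv ov y x := by
  -- with fresh indices `cases` can split both arcs; it cannot unify e.g. `iv y` with `ov x`
  suffices ∀ a b c d, EdgeRootedArc G u w iv ov a b → EdgeRootedArc G u w iv ov c d →
      G.Adj a b → a = d → b = c → False from fun h' => this x y y x h h' hxy rfl rfl
  intro a b c d hab hcd hadj
  have := hsel a
  have := hsel b
  cases hab <;> cases hcd <;> grind [G.adj_comm, G.irrefl]

variable [Fintype V] [DecidableRel G.Adj] (h : Fintype.card V < 2 * G.minDegree)
  {o : V → V → Prop} (ho : ∀ x y, G.Adj x y → EdgeRootedArc G u w iv ov x y → o x y)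
include h ho

omit huw in
theorem dPathLE_two_from_root (v : V) : DPathLE o 2 u v := by
  have step {x y : V} (hxy : G.Adj x y) (hD : EdgeRootedArc G u w iv ov x y) :
      DPathLE o 1 x y := .single (ho x y hxy hD)
  by_cases hvu : v = u
  · exact hvu ▸ .refl v
  by_cases hvw : v = w
  · subst hvw
    obtain ⟨c, huc, hvc⟩ := exists_adj_adj_of_card_lt_two_mul_minDegree h u v
    exact (step huc (.fromU (G.ne_of_adj hvc).symm)).trans
      (step hvc.symm (.toW (G.ne_of_adj huc).symm))
  by_cases huv : G.Adj u v
  · exact (step huv (.fromU hvw)).mono_s12 (by omega)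
  by_cases hwv : G.Adj w v
  · obtain ⟨c, huc, hvc, hcw⟩ :=
      exists_adj_adj_ne_of_card_lt_two_mul_minDegree h (Ne.symm hvu) huv w
    exact (step huc (.fromU hcw)).trans (step hvc.symm (.layer huc hcw hwv hvu (.inr huv)))
  · obtain ⟨hv, hu, -⟩ := hsel v huv hwv
    have hiv : iv v ≠ w := fun hw => hwv (hw ▸ hv).symm
    exact (step hu (.fromU hiv)).trans (step hv.symm (.farIn huv hwv))

theorem dPathLE_three_to_root (v : V) : DPathLE o 3 v u := by
  have step {x y : V} (hxy : G.Adj x y) (hD : EdgeRootedArc G u w iv ov x y) :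
      DPathLE o 1 x y := .single (ho x y hxy hD)
  have hwu : DPathLE o 1 w u := step huw.symm .back
  by_cases hvu : v = u
  · exact hvu ▸ .refl v
  by_cases hvw : v = w
  · exact hvw ▸ hwu.mono_s12 (by omega)
  by_cases hwv : G.Adj w v
  · exact ((step hwv.symm (.toW hvu)).trans hwu).mono_s12 (by omega)
  by_cases huv : G.Adj u v
  · obtain ⟨c, hvc, hwc, hcu⟩ :=
      exists_adj_adj_ne_of_card_lt_two_mul_minDegree h hvw (fun hvw' => hwv hvw'.symm) u
    exact ((step hvc (.layer huv hvw hwc hcu (.inl hwv))).trans (step hwc.symm (.toW hcu))).trans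
      hwu
  · obtain ⟨-, -, hv, hw, -⟩ := hsel v huv hwv
    have hov : ov v ≠ u := fun hu => huv (hu ▸ hv).symm
    exact ((step hv (.farOut huv hwv)).trans (step hw.symm (.toW hov))).trans hwu

end EdgeRootedOrientation

theorem orientRadiusLE_four_of_card_lt_two_mul_minDegree [Fintype V] {G : SimpleGraph V}
    [DecidableRel G.Adj] (h : Fintype.card V < 2 * G.minDegree) : OrientRadiusLE G 4 := by
  obtain ⟨u⟩ : Nonempty V := by
    rcases isEmpty_or_nonempty V with hV | hV
    · simp at h
    · exact hV
  obtain ⟨w, huw, -⟩ := exists_adj_adj_of_card_lt_two_mul_minDegree h u u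
  have relay : ∀ v, ¬ G.Adj u v → ¬ G.Adj w v →
      ∃ a b, G.Adj v a ∧ G.Adj u a ∧ G.Adj v b ∧ G.Adj w b ∧ a ≠ b := by
    intro v huv hwv
    obtain ⟨b, hvb, hwb⟩ := exists_adj_adj_of_card_lt_two_mul_minDegree h v w
    obtain ⟨a, hva, hua, hab⟩ := exists_adj_adj_ne_of_card_lt_two_mul_minDegree h
      (by rintro rfl; exact hwv huw.symm) (fun hvu => huv hvu.symm) b
    exact ⟨a, b, hva, hua, hvb, hwb, hab⟩
  choose! iv ov hsel using relay
  obtain ⟨o, ho, hD⟩ := exists_isOrientation_of_asymm G fun _ _ => EdgeRootedArc.asymm huw hsel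
  exact ⟨o, ho, u, fun v => ⟨(dPathLE_two_from_root hsel h hD v).mono_s12 (by omega),
    (dPathLE_three_to_root huw hsel h hD v).mono_s12 (by omega)⟩⟩

/-- A graph on `n` vertices with minimum degree `δ(G) > n/2` admits an
orientation of radius at most `4` and an orientation of diameter at most `8`. -/
theorem oriented_bounds_large_min_degree [Fintype V] (G : SimpleGraph V)
    [DecidableRel G.Adj] (h : Fintype.card V < 2 * G.minDegree) :
    OrientRadiusLE G 4 ∧ OrientDiamLE G 8 := by
  have hR := orientRadiusLE_four_of_card_lt_two_mul_minDegree h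
  exact ⟨hR, hR.orientDiamLE⟩
end

section
/- Let G be a finite bipartite graph with bipartition (V1, V2), where |V1| = n ≥ 1 and |V2| = m ≥ 1. Suppose there are integers k and r with k > ⌈m/2⌉ and r > ⌈n/2⌉ such that every vertex of V1 has degree at least k and every vertex of V2 has degree at least r. Then G admits a rainbow coloring with 12 colors, i.e., rc(G) ≤ 12. -/
/-!
Fix an edge `uw` with `u ∈ V1`. The degree bounds force every vertex of `V1` to share two
neighbours with `u` and every vertex of `V2` to share two with `w`. Through these common
neighbours every vertex has a short route into `u` coloured from `{0, 1, 4, 5, 11}` and is reached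
from `w` by a short route coloured from `{7, 8, 9}`; gluing the two along `uw` (colour `6`) gives a
rainbow walk between any two vertices, and a rainbow walk shortens to a rainbow path. The two
route systems are edge-disjoint except at blocked vertices, which are adjacent to `u`: these are
reached by the edge from `u` (colour `11`) or by a route from `w` whose last edge is recoloured
`5`, and every in-route has a variant avoiding the colours of whichever alternative is used.
-/

open SimpleGraph Finset

variable {V : Type*}

section RainbowWalks

variable {α : Type*} {G : SimpleGraph V} {c : Sym2 V → α} {X Y : Finset α} {x y z : V} {a : α}

def RainbowReach (G : SimpleGraph V) (c : Sym2 V → α) (X : Finset α) (x y : V) : Prop :=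
  ∃ p : G.Walk x y, (p.edges.map c).Nodup ∧ ∀ e ∈ p.edges, c e ∈ X

namespace RainbowReach

theorem refl : RainbowReach G c X x x := ⟨.nil, by simp, by simp⟩

theorem of_adj (h : G.Adj x y) (hc : c s(x, y) = a) : RainbowReach G c {a} x y :=
  ⟨.cons h .nil, by simp, by simp [hc]⟩

theorem of_adj_rev (h : G.Adj x y) (hc : c s(x, y) = a) : RainbowReach G c {a} y x :=
  of_adj h.symm (by rwa [Sym2.eq_swap])

theorem mono (h : RainbowReach G c X x y) (hXY : X ⊆ Y) : RainbowReach G c Y x y :=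
  let ⟨p, hp, hpX⟩ := h
  ⟨p, hp, fun e he => hXY (hpX e he)⟩

theorem trans [DecidableEq α] (h₁ : RainbowReach G c X x y) (h₂ : RainbowReach G c Y y z)
    (hXY : Disjoint X Y) : RainbowReach G c (X ∪ Y) x z := by
  obtain ⟨p, hp, hpX⟩ := h₁
  obtain ⟨q, hq, hqY⟩ := h₂
  refine ⟨p.append q, ?_, fun e he => ?_⟩
  · rw [Walk.edges_append, List.map_append, List.nodup_append]
    refine ⟨hp, hq, ?_⟩
    simp only [List.mem_map]
    rintro _ ⟨e, he, rfl⟩ _ ⟨f, hf, rfl⟩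
    exact hXY.forall_ne_finset (hpX e he) (hqY f hf)
  · rcases List.mem_append.mp (Walk.edges_append p q ▸ he) with he | he
    exacts [mem_union_left _ (hpX e he), mem_union_right _ (hqY e he)]

theorem exists_isPath [DecidableEq V] (h : RainbowReach G c X x y) :
    ∃ p : G.Walk x y, p.IsPath ∧ (p.edges.map c).Nodup := by
  obtain ⟨p, hp, -⟩ := h
  refine ⟨p.bypass, p.bypass_isPath, p.bypass_isPath.isTrail.edges_nodup.map_on ?_⟩
  intro e he f hf
  exact List.inj_on_of_nodup_map hp (p.edges_bypass_subset_edges he)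
    (p.edges_bypass_subset_edges hf)

end RainbowReach

theorem isRainbowColoring_of_rainbowReach {k : ℕ} {c : Sym2 V → Fin k}
    (h : ∀ x y, ∃ X, RainbowReach G c X x y) : IsRainbowColoring G k c := by
  classical
  intro x y _
  obtain ⟨X, hX⟩ := h x y
  exact hX.exists_isPath

end RainbowWalks

section Counting

variable {G : SimpleGraph V} {x y : V}

theorem exists_adj_adj_ne_of_two_le_encard (h : 2 ≤ (G.commonNeighbors x y).encard) (z : V) :
    ∃ a, G.Adj x a ∧ G.Adj y a ∧ a ≠ z := by
  obtain ⟨a, ha, haz⟩ :=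
    Set.exists_ne_of_one_lt_encard ((by norm_num : (1 : ℕ∞) < 2).trans_le h) z
  exact ⟨a, (G.mem_commonNeighbors.mp ha).1, (G.mem_commonNeighbors.mp ha).2, haz⟩

theorem two_le_encard_commonNeighbors [Fintype V] [DecidableRel G.Adj] {U : Finset V} {k : ℕ}
    (hx : G.neighborFinset x ⊆ U) (hy : G.neighborFinset y ⊆ U) (hk : (#U + 1) / 2 < k)
    (hkx : k ≤ G.degree x) (hky : k ≤ G.degree y) : 2 ≤ (G.commonNeighbors x y).encard := by
  classical
  have hcoe : G.commonNeighbors x y = ↑(G.neighborFinset x ∩ G.neighborFinset y) := by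
    ext; simp [mem_commonNeighbors]
  rw [hcoe, Set.encard_coe_eq_coe_finsetCard]
  have hunion := card_union_add_card_inter (G.neighborFinset x) (G.neighborFinset y)
  have hle := card_le_card (union_subset hx hy)
  rw [card_neighborFinset_eq_degree, card_neighborFinset_eq_degree] at hunion
  norm_cast
  omega

end Counting

section Bipartition

variable {G : SimpleGraph V} {V1 V2 : Finset V}

theorem mem_of_adj_of_bipartition (hdisj : Disjoint V1 V2)
    (hbip : ∀ x y : V, G.Adj x y → (x ∈ V1 ∧ y ∈ V2) ∨ (x ∈ V2 ∧ y ∈ V1))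
    {x y : V} (hx : x ∈ V1) (h : G.Adj x y) : y ∈ V2 :=
  (hbip x y h).elim And.right fun h' => absurd hx (disjoint_right.mp hdisj h'.1)

theorem mem_iff_notMem_of_bipartition (hdisj : Disjoint V1 V2)
    (hbip : ∀ x y : V, G.Adj x y → (x ∈ V1 ∧ y ∈ V2) ∨ (x ∈ V2 ∧ y ∈ V1))
    {x y : V} (h : G.Adj x y) : x ∈ V1 ↔ y ∉ V1 :=
  ⟨fun hx => disjoint_right.mp hdisj (mem_of_adj_of_bipartition hdisj hbip hx h),
    fun hy => (hbip x y h).elim And.left fun h' => absurd h'.2 hy⟩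

end Bipartition

structure IsHubEdge (G : SimpleGraph V) (S : Set V) (u w : V) : Prop where
  mem_iff_notMem : ∀ ⦃x y⦄, G.Adj x y → (x ∈ S ↔ y ∉ S)
  hub_mem : u ∈ S
  adj_hub : G.Adj u w
  two_le_left : ∀ x ∈ S, x ≠ u → 2 ≤ (G.commonNeighbors x u).encard
  two_le_right : ∀ y ∉ S, y ≠ w → 2 ≤ (G.commonNeighbors y w).encard

namespace IsHubEdge

section Construction

variable [Nonempty V] (G : SimpleGraph V) (u w : V)

noncomputable def hubNbr (x : V) : V :=
  Classical.epsilon fun a => G.Adj x a ∧ G.Adj u a ∧ a ≠ w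

/-- `y` is blocked when every route `w – b – y` (`b ≠ u`) would reuse the edge
`b – hubNbr b` of an in-route, so that no colour of `b – y` serves both routes. -/
def IsBlocked (y : V) : Prop :=
  ∀ b, G.Adj y b → G.Adj w b → b ≠ u → hubNbr G u w b = y

noncomputable def wNbr (y : V) : V :=
  Classical.epsilon fun b =>
    G.Adj y b ∧ G.Adj w b ∧ b ≠ u ∧ (IsBlocked G u w y ∨ hubNbr G u w b ≠ y)

noncomputable def sideNbr (x : V) : V :=
  Classical.epsilon fun a => G.Adj x a ∧ a ≠ hubNbr G u w x

noncomputable def detourNbr (y : V) : V :=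
  Classical.epsilon fun b => G.Adj y b ∧ G.Adj w b ∧ b ≠ wNbr G u w y

open Classical in
noncomputable def hubColor (x y : V) : Fin 12 :=
  if x = u then (if y = w then 6 else if IsBlocked G u w y then 11 else 0)
  else if y = w then 7
  else if ¬ G.Adj w x ∧ sideNbr G u w x = y then 9
  else if wNbr G u w y = x then (if IsBlocked G u w y then 5 else 8)
  else if hubNbr G u w x = y then 1
  else 4

open Classical in
noncomputable def edgeColoring (S : Set V) : Sym2 V → Fin 12 :=
  Sym2.lift ⟨fun p q => if p ∈ S ∧ q ∉ S then hubColor G u w p q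
    else if q ∈ S ∧ p ∉ S then hubColor G u w q p else 4, fun p q => by
      by_cases hp : p ∈ S <;> by_cases hq : q ∈ S <;> simp [hp, hq]⟩

end Construction

variable {G : SimpleGraph V} {S : Set V} {u w a x y s t : V}

theorem notMem_of_adj (H : IsHubEdge G S u w) (hx : x ∈ S) (h : G.Adj x y) : y ∉ S :=
  (H.mem_iff_notMem h).mp hx

theorem mem_of_adj (H : IsHubEdge G S u w) (hy : y ∉ S) (h : G.Adj x y) : x ∈ S :=
  (H.mem_iff_notMem h).mpr hy

variable [Nonempty V]

theorem hubNbr_spec (H : IsHubEdge G S u w) (hx : x ∈ S) (hxu : x ≠ u) :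
    G.Adj x (hubNbr G u w x) ∧ G.Adj u (hubNbr G u w x) ∧ hubNbr G u w x ≠ w :=
  Classical.epsilon_spec (exists_adj_adj_ne_of_two_le_encard (H.two_le_left x hx hxu) w)

theorem wNbr_spec (H : IsHubEdge G S u w) (hy : y ∉ S) (hyw : y ≠ w) :
    G.Adj y (wNbr G u w y) ∧ G.Adj w (wNbr G u w y) ∧ wNbr G u w y ≠ u ∧
      (IsBlocked G u w y ∨ hubNbr G u w (wNbr G u w y) ≠ y) := by
  have hex : ∃ b, G.Adj y b ∧ G.Adj w b ∧ b ≠ u ∧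
      (IsBlocked G u w y ∨ hubNbr G u w b ≠ y) := by
    by_cases hb : IsBlocked G u w y
    · obtain ⟨b, hyb, hwb, hbu⟩ :=
        exists_adj_adj_ne_of_two_le_encard (H.two_le_right y hy hyw) u
      exact ⟨b, hyb, hwb, hbu, .inl hb⟩
    · simp only [IsBlocked, not_forall] at hb
      obtain ⟨b, hyb, hwb, hbu, hby⟩ := hb
      exact ⟨b, hyb, hwb, hbu, .inr hby⟩
  exact Classical.epsilon_spec hex

theorem adj_of_isBlocked (H : IsHubEdge G S u w) (hy : y ∉ S) (hyw : y ≠ w)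
    (hb : IsBlocked G u w y) : G.Adj u y := by
  obtain ⟨hyb, hwb, hbu, -⟩ := H.wNbr_spec hy hyw
  rw [← hb _ hyb hwb hbu]
  exact (H.hubNbr_spec (H.mem_of_adj hy hyb.symm) hbu).2.1

theorem sideNbr_spec (H : IsHubEdge G S u w) (hx : x ∈ S) (hxu : x ≠ u) :
    G.Adj x (sideNbr G u w x) ∧ sideNbr G u w x ≠ hubNbr G u w x := by
  obtain ⟨a, hxa, -, ha⟩ :=
    exists_adj_adj_ne_of_two_le_encard (H.two_le_left x hx hxu) (hubNbr G u w x)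
  exact Classical.epsilon_spec (p := fun a => G.Adj x a ∧ a ≠ hubNbr G u w x) ⟨a, hxa, ha⟩

theorem detourNbr_spec (H : IsHubEdge G S u w) (hy : y ∉ S) (hyw : y ≠ w) :
    G.Adj y (detourNbr G u w y) ∧ G.Adj w (detourNbr G u w y) ∧
      detourNbr G u w y ≠ wNbr G u w y :=
  Classical.epsilon_spec
    (exists_adj_adj_ne_of_two_le_encard (H.two_le_right y hy hyw) (wNbr G u w y))

theorem edgeColoring_eq (H : IsHubEdge G S u w) (hx : x ∈ S) (h : G.Adj x y) :
    edgeColoring G u w S s(x, y) = hubColor G u w x y := by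
  simp [edgeColoring, hx, H.notMem_of_adj hx h]

theorem color_hub (H : IsHubEdge G S u w) : edgeColoring G u w S s(u, w) = 6 := by
  simp [H.edgeColoring_eq H.hub_mem H.adj_hub, hubColor]

theorem color_u_of_adj (H : IsHubEdge G S u w) (hy : G.Adj u y) (hyw : y ≠ w) :
    edgeColoring G u w S s(u, y) = 0 ∨ edgeColoring G u w S s(u, y) = 11 := by
  rw [H.edgeColoring_eq H.hub_mem hy]
  by_cases hb : IsBlocked G u w y <;> simp [hubColor, hyw, hb]

theorem color_u_of_isBlocked (H : IsHubEdge G S u w) (hy : G.Adj u y) (hyw : y ≠ w)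
    (hb : IsBlocked G u w y) : edgeColoring G u w S s(u, y) = 11 := by
  simp [H.edgeColoring_eq H.hub_mem hy, hubColor, hyw, hb]

theorem color_w (H : IsHubEdge G S u w) (hx : x ∈ S) (hxu : x ≠ u) (h : G.Adj x w) :
    edgeColoring G u w S s(x, w) = 7 := by
  simp [H.edgeColoring_eq hx h, hubColor, hxu]

theorem color_hubNbr (H : IsHubEdge G S u w) (hx : x ∈ S) (hxu : x ≠ u) :
    edgeColoring G u w S s(x, hubNbr G u w x) = 1 ∨
      (edgeColoring G u w S s(x, hubNbr G u w x) = 5 ∧ G.Adj w x) := by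
  obtain ⟨hxa, -, haw⟩ := H.hubNbr_spec hx hxu
  have hside := (H.sideNbr_spec hx hxu).2
  rw [H.edgeColoring_eq hx hxa]
  by_cases hβ : wNbr G u w (hubNbr G u w x) = x
  · obtain ⟨-, hw, -, hb⟩ := H.wNbr_spec (H.notMem_of_adj hx hxa) haw
    rw [hβ] at hw hb
    have hb := hb.resolve_right (not_not.mpr rfl)
    exact .inr ⟨by simp [hubColor, hxu, haw, hside, hβ, hb], hw⟩
  · exact .inl (by simp [hubColor, hxu, haw, hside, hβ])

theorem color_wNbr_of_isBlocked (H : IsHubEdge G S u w) (hy : y ∉ S) (hyw : y ≠ w)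
    (hb : IsBlocked G u w y) : edgeColoring G u w S s(wNbr G u w y, y) = 5 := by
  obtain ⟨hyb, hwb, hbu, -⟩ := H.wNbr_spec hy hyw
  simp [H.edgeColoring_eq (H.mem_of_adj hy hyb.symm) hyb.symm, hubColor, hbu, hyw, hwb, hb]

theorem color_wNbr_of_not_isBlocked (H : IsHubEdge G S u w) (hy : y ∉ S) (hyw : y ≠ w)
    (hb : ¬ IsBlocked G u w y) : edgeColoring G u w S s(wNbr G u w y, y) = 8 := by
  obtain ⟨hyb, hwb, hbu, -⟩ := H.wNbr_spec hy hyw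
  simp [H.edgeColoring_eq (H.mem_of_adj hy hyb.symm) hyb.symm, hubColor, hbu, hyw, hwb, hb]

theorem color_sideNbr (H : IsHubEdge G S u w) (hx : x ∈ S) (hxu : x ≠ u) (hwx : ¬ G.Adj w x) :
    edgeColoring G u w S s(x, sideNbr G u w x) = 9 := by
  have hxg := (H.sideNbr_spec hx hxu).1
  have hgw : sideNbr G u w x ≠ w := by rintro h; exact hwx (h ▸ hxg).symm
  simp [H.edgeColoring_eq hx hxg, hubColor, hxu, hgw, hwx]

theorem color_detourNbr (H : IsHubEdge G S u w) (hy : y ∉ S) (huy : ¬ G.Adj u y) :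
    edgeColoring G u w S s(detourNbr G u w y, y) = 4 := by
  have hyw : y ≠ w := by rintro rfl; exact huy H.adj_hub
  obtain ⟨hyb, hwb, hbβ⟩ := H.detourNbr_spec hy hyw
  have hbu : detourNbr G u w y ≠ u := by rintro h; exact huy (h ▸ hyb).symm
  have hbS := H.mem_of_adj hy hyb.symm
  have hα : hubNbr G u w (detourNbr G u w y) ≠ y := by
    rintro h; exact huy (h ▸ (H.hubNbr_spec hbS hbu).2.1)
  simp [H.edgeColoring_eq hbS hyb.symm, hubColor, hbu, hyw, hwb, Ne.symm hbβ, hα]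

theorem reach_u_of_adj (H : IsHubEdge G S u w) (ha : G.Adj u a) (haw : a ≠ w) :
    RainbowReach G (edgeColoring G u w S) {0} a u ∨
      RainbowReach G (edgeColoring G u w S) {11} a u :=
  (H.color_u_of_adj ha haw).imp (.of_adj_rev ha) (.of_adj_rev ha)

theorem reach_in_of_mem (H : IsHubEdge G S u w) (hs : s ∈ S) :
    RainbowReach G (edgeColoring G u w S) {0, 1, 5, 11} s u ∧
      (RainbowReach G (edgeColoring G u w S) {0, 1, 5, 6, 7} s u ∨
        RainbowReach G (edgeColoring G u w S) {0, 1, 11} s u) := by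
  rcases eq_or_ne s u with rfl | hsu
  · exact ⟨.refl, .inl .refl⟩
  obtain ⟨hsa, hua, haw⟩ := H.hubNbr_spec hs hsu
  rcases H.color_hubNbr hs hsu with h1 | ⟨h5, hws⟩
  · have e := RainbowReach.of_adj hsa h1
    rcases H.reach_u_of_adj hua haw with h | h
    · exact ⟨(e.trans h (by decide)).mono (by decide),
        .inl ((e.trans h (by decide)).mono (by decide))⟩
    · exact ⟨(e.trans h (by decide)).mono (by decide),
        .inr ((e.trans h (by decide)).mono (by decide))⟩
  · have e := RainbowReach.of_adj hsa h5
    have via_w := (RainbowReach.of_adj hws.symm (H.color_w hs hsu hws.symm)).trans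
      (.of_adj_rev H.adj_hub H.color_hub) (by decide)
    refine ⟨?_, .inl (via_w.mono (by decide))⟩
    rcases H.reach_u_of_adj hua haw with h | h <;>
      exact (e.trans h (by decide)).mono (by decide)

theorem reach_in (H : IsHubEdge G S u w) (hsw : s ≠ w) :
    RainbowReach G (edgeColoring G u w S) {0, 1, 4, 5, 11} s u ∧
      (RainbowReach G (edgeColoring G u w S) {0, 1, 4, 5, 6, 7} s u ∨
        RainbowReach G (edgeColoring G u w S) {0, 1, 4, 11} s u) := by
  by_cases hs : s ∈ S
  · obtain ⟨h₁, h₂⟩ := H.reach_in_of_mem hs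
    exact ⟨h₁.mono (by decide), h₂.imp (·.mono (by decide)) (·.mono (by decide))⟩
  by_cases hus : G.Adj u s
  · rcases H.reach_u_of_adj hus hsw with h | h
    · exact ⟨h.mono (by decide), .inl (h.mono (by decide))⟩
    · exact ⟨h.mono (by decide), .inr (h.mono (by decide))⟩
  obtain ⟨hsb, -, -⟩ := H.detourNbr_spec hs hsw
  have e := RainbowReach.of_adj_rev hsb.symm (H.color_detourNbr hs hus)
  obtain ⟨h₁, h₂⟩ := H.reach_in_of_mem (H.mem_of_adj hs hsb.symm)
  refine ⟨(e.trans h₁ (by decide)).mono (by decide), h₂.imp ?_ ?_⟩ <;>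
    exact fun h => (e.trans h (by decide)).mono (by decide)

theorem reach_out_of_notMem (H : IsHubEdge G S u w) (ht : t ∉ S) (htw : t ≠ w) :
    RainbowReach G (edgeColoring G u w S) {7, 8} w t ∨
      (RainbowReach G (edgeColoring G u w S) {11} u t ∧
        RainbowReach G (edgeColoring G u w S) {5, 7} w t) := by
  obtain ⟨htb, hwb, hbu, -⟩ := H.wNbr_spec ht htw
  have hbS := H.mem_of_adj ht htb.symm
  have e := RainbowReach.of_adj_rev hwb.symm (H.color_w hbS hbu hwb.symm)
  by_cases hb : IsBlocked G u w t
  · have hut := H.adj_of_isBlocked ht htw hb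
    refine .inr ⟨.of_adj hut (H.color_u_of_isBlocked hut htw hb), ?_⟩
    exact (e.trans (.of_adj htb.symm (H.color_wNbr_of_isBlocked ht htw hb)) (by decide)).mono
      (by decide)
  · exact .inl ((e.trans (.of_adj htb.symm (H.color_wNbr_of_not_isBlocked ht htw hb))
      (by decide)).mono (by decide))

theorem reach_out (H : IsHubEdge G S u w) (htu : t ≠ u) :
    RainbowReach G (edgeColoring G u w S) {7, 8, 9} w t ∨
      (RainbowReach G (edgeColoring G u w S) {9, 11} u t ∧
        RainbowReach G (edgeColoring G u w S) {5, 7, 9} w t) := by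
  by_cases ht : t ∈ S
  · by_cases hwt : G.Adj w t
    · exact .inl ((RainbowReach.of_adj_rev hwt.symm (H.color_w ht htu hwt.symm)).mono
        (by decide))
    have htg := (H.sideNbr_spec ht htu).1
    have hgw : sideNbr G u w t ≠ w := by rintro h; exact hwt (h ▸ htg).symm
    have e := RainbowReach.of_adj_rev htg (H.color_sideNbr ht htu hwt)
    rcases H.reach_out_of_notMem (H.notMem_of_adj ht htg) hgw with h | ⟨h, h'⟩
    · exact .inl ((h.trans e (by decide)).mono (by decide))
    · exact .inr ⟨(h.trans e (by decide)).mono (by decide),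
        (h'.trans e (by decide)).mono (by decide)⟩
  rcases eq_or_ne t w with rfl | htw
  · exact .inl .refl
  exact (H.reach_out_of_notMem ht htw).imp (·.mono (by decide))
    fun h => ⟨h.1.mono (by decide), h.2.mono (by decide)⟩

theorem exists_rainbowReach (H : IsHubEdge G S u w) (s t : V) :
    ∃ X, RainbowReach G (edgeColoring G u w S) X s t := by
  have hub : RainbowReach G (edgeColoring G u w S) {6} u w := .of_adj H.adj_hub H.color_hub
  have hub' : RainbowReach G (edgeColoring G u w S) {6} w u := .of_adj_rev H.adj_hub H.color_hub
  rcases eq_or_ne s w with rfl | hsw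
  · rcases eq_or_ne t u with rfl | htu
    · exact ⟨_, hub'⟩
    rcases H.reach_out htu with h | ⟨h, -⟩
    exacts [⟨_, h⟩, ⟨_, hub'.trans h (by decide)⟩]
  obtain ⟨h₁, h₂⟩ := H.reach_in hsw
  rcases eq_or_ne t u with rfl | htu
  · exact ⟨_, h₁⟩
  rcases H.reach_out htu with h | ⟨h, h'⟩
  · exact ⟨_, h₁.trans (hub.trans h (by decide)) (by decide)⟩
  rcases h₂ with h₂ | h₂
  exacts [⟨_, h₂.trans h (by decide)⟩,
    ⟨_, h₂.trans (hub.trans h' (by decide)) (by decide)⟩]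

theorem rcLE_twelve (H : IsHubEdge G S u w) : RcLE G 12 :=
  ⟨_, isRainbowColoring_of_rainbowReach H.exists_rainbowReach⟩

end IsHubEdge

theorem bipartite_rc_le_twelve_general [Fintype V] (G : SimpleGraph V) [DecidableRel G.Adj]
    (V1 V2 : Finset V) (hdisj : Disjoint V1 V2) (hcover : ∀ v : V, v ∈ V1 ∨ v ∈ V2)
    (hbip : ∀ x y : V, G.Adj x y → (x ∈ V1 ∧ y ∈ V2) ∨ (x ∈ V2 ∧ y ∈ V1))
    (n m : ℕ) (hn : V1.card = n) (hm : V2.card = m) (hn1 : 1 ≤ n)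
    (k r : ℕ) (hk : (m + 1) / 2 < k) (hr : (n + 1) / 2 < r)
    (hdeg1 : ∀ x ∈ V1, k ≤ G.degree x) (hdeg2 : ∀ y ∈ V2, r ≤ G.degree y) :
    RcLE G 12 := by
  have hbip' : ∀ x y : V, G.Adj x y → (x ∈ V2 ∧ y ∈ V1) ∨ (x ∈ V1 ∧ y ∈ V2) :=
    fun x y h => (hbip x y h).symm
  have nbr₁ : ∀ x ∈ V1, G.neighborFinset x ⊆ V2 := fun x hx y hy =>
    mem_of_adj_of_bipartition hdisj hbip hx ((G.mem_neighborFinset x y).mp hy)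
  have nbr₂ : ∀ y ∈ V2, G.neighborFinset y ⊆ V1 := fun y hy x hx =>
    mem_of_adj_of_bipartition hdisj.symm hbip' hy ((G.mem_neighborFinset y x).mp hx)
  obtain ⟨u, hu⟩ : V1.Nonempty := card_pos.mp (by omega)
  obtain ⟨w, huw⟩ := (G.degree_pos_iff_exists_adj u).mp (by have := hdeg1 u hu; omega)
  have hw : w ∈ V2 := nbr₁ u hu ((G.mem_neighborFinset u w).mpr huw)
  have : Nonempty V := ⟨u⟩
  refine IsHubEdge.rcLE_twelve (S := V1) (u := u) (w := w)
    ⟨fun x y h => mem_iff_notMem_of_bipartition hdisj hbip h, hu, huw,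
      fun x hx _ => ?_, fun y hy _ => ?_⟩
  · exact two_le_encard_commonNeighbors (nbr₁ x hx) (nbr₁ u hu) (hm ▸ hk) (hdeg1 x hx)
      (hdeg1 u hu)
  · have hy := (hcover y).resolve_left hy
    exact two_le_encard_commonNeighbors (nbr₂ y hy) (nbr₂ w hw) (hn ▸ hr) (hdeg2 y hy)
      (hdeg2 w hw)

/-- A bipartite graph with parts of sizes `n, m ≥ 1` in which every vertex of
`V1` has degree `≥ k > ⌈m/2⌉` and every vertex of `V2` has degree `≥ r > ⌈n/2⌉` admits a
rainbow coloring with `12` colors, i.e. `rc(G) ≤ 12`. -/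
theorem bipartite_rc_le_twelve [Fintype V] (G : SimpleGraph V) [DecidableRel G.Adj]
    (V1 V2 : Finset V) (hdisj : Disjoint V1 V2) (hcover : ∀ v : V, v ∈ V1 ∨ v ∈ V2)
    (hbip : ∀ x y : V, G.Adj x y → (x ∈ V1 ∧ y ∈ V2) ∨ (x ∈ V2 ∧ y ∈ V1))
    (n m : ℕ) (hn : V1.card = n) (hm : V2.card = m) (hn1 : 1 ≤ n) (hm1 : 1 ≤ m)
    (k r : ℕ) (hk : (m + 1) / 2 < k) (hr : (n + 1) / 2 < r)
    (hdeg1 : ∀ x ∈ V1, k ≤ G.degree x) (hdeg2 : ∀ y ∈ V2, r ≤ G.degree y) :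
    RcLE G 12 :=
  bipartite_rc_le_twelve_general G V1 V2 hdisj hcover hbip n m hn hm hn1 k r hk hr hdeg1 hdeg2
end

section
/- Let G be a finite graph on n vertices with minimum degree δ(G) > n/2 (equivalently, 2δ(G) > n). Then G admits a rainbow coloring with 6 colors, i.e., rc(G) ≤ 6. -/
open SimpleGraph Finset

variable {V : Type*}

section helpers
variable [Fintype V] [DecidableEq V] (G : SimpleGraph V) [DecidableRel G.Adj]

lemma common_big (h : Fintype.card V < 2 * G.minDegree) {x z : V} (hxz : x ≠ z)
    (hadj : ¬ G.Adj z x) : 3 ≤ (G.neighborFinset x ∩ G.neighborFinset z).card := by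
  classical
  have hsub : G.neighborFinset x ∪ G.neighborFinset z ⊆ Finset.univ \ {x, z} := by
    intro w hw
    simp only [Finset.mem_union, mem_neighborFinset] at hw
    simp only [Finset.mem_sdiff, Finset.mem_univ, Finset.mem_insert, Finset.mem_singleton,
      true_and]
    push_neg
    constructor
    · rintro rfl
      rcases hw with h' | h'
      · exact G.irrefl h'
      · exact hadj h'
    · rintro rfl
      rcases hw with h' | h'
      · exact hadj h'.symm
      · exact G.irrefl h'
  have hc2 : ({x, z} : Finset V).card = 2 := by
    rw [Finset.card_insert_of_notMem (by simp [hxz]), Finset.card_singleton]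
  have hcard : (G.neighborFinset x ∪ G.neighborFinset z).card ≤ Fintype.card V - 2 := by
    calc (G.neighborFinset x ∪ G.neighborFinset z).card
        ≤ (Finset.univ \ ({x, z} : Finset V)).card := Finset.card_le_card hsub
      _ = Fintype.card V - 2 := by
          rw [Finset.card_sdiff_of_subset (Finset.subset_univ _), hc2, Finset.card_univ]
  have h1 : G.minDegree ≤ (G.neighborFinset x).card := G.minDegree_le_degree x
  have h2 : G.minDegree ≤ (G.neighborFinset z).card := G.minDegree_le_degree z
  have h3 := Finset.card_union_add_card_inter (G.neighborFinset x) (G.neighborFinset z)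
  have h4 : 2 ≤ Fintype.card V := by
    have h5 : ({x, z} : Finset V).card ≤ Fintype.card V := by
      rw [← Finset.card_univ]; exact Finset.card_le_card (Finset.subset_univ _)
    omega
  omega

end helpers

private def rcfun [DecidableEq V] (G : SimpleGraph V) [DecidableRel G.Adj]
    (u v : V) (ab : V → V × V) (x y : V) : Fin 6 :=
  if (x = u ∧ y = v) ∨ (x = v ∧ y = u) then 2
  else if x = u ∨ y = u then 0
  else if x = v ∨ y = v then 1
  else if ((ab x).1 = y ∧ ¬G.Adj u x) ∨ ((ab y).1 = x ∧ ¬G.Adj u y) then 3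
  else if ((ab x).2 = y ∧ ¬G.Adj v x) ∨ ((ab y).2 = x ∧ ¬G.Adj v y) then 4
  else 5

private lemma rcfun_symm [DecidableEq V] (G : SimpleGraph V) [DecidableRel G.Adj]
    (u v : V) (ab : V → V × V) :
    ∀ x y, rcfun G u v ab x y = rcfun G u v ab y x := by
  intro x y
  unfold rcfun
  exact if_congr (by tauto) rfl (if_congr (by tauto) rfl (if_congr (by tauto) rfl
    (if_congr (by tauto) rfl (if_congr (by tauto) rfl rfl))))

/-- A graph on `n` vertices with minimum degree `δ(G) > n/2` admits a
rainbow coloring with `6` colors, i.e. `rc(G) ≤ 6`. -/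
theorem rc_large_min_degree [Fintype V] (G : SimpleGraph V)
    [DecidableRel G.Adj] (h : Fintype.card V < 2 * G.minDegree) :
    RcLE G 6 := by
  classical
  cases isEmpty_or_nonempty V with
  | inl hV => exact ⟨fun _ => 0, fun x y _ => (IsEmpty.false x).elim⟩
  | inr hV =>
  have hδ : 0 < G.minDegree := by
    have : 0 < Fintype.card V := Fintype.card_pos
    omega
  obtain ⟨u⟩ := hV
  obtain ⟨v, huv⟩ : ∃ v, G.Adj u v := by
    rw [← SimpleGraph.degree_pos_iff_exists_adj]
    exact lt_of_lt_of_le hδ (G.minDegree_le_degree u)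
  have huvne : u ≠ v := huv.ne
  -- choose the access vertices
  have key : ∀ x : V, ∃ ab : V × V,
      ((x ≠ u ∧ x ≠ v ∧ ¬G.Adj u x) → G.Adj x ab.1 ∧ G.Adj u ab.1 ∧ ab.1 ≠ v) ∧
      ((x ≠ u ∧ x ≠ v ∧ ¬G.Adj v x) → G.Adj x ab.2 ∧ G.Adj v ab.2 ∧ ab.2 ≠ u) ∧
      ((x ≠ u ∧ x ≠ v ∧ ¬G.Adj u x ∧ ¬G.Adj v x) → ab.1 ≠ ab.2) := by
    intro x
    by_cases hu : x ≠ u ∧ x ≠ v ∧ ¬G.Adj u x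
    · have h3u : 3 ≤ (G.neighborFinset x ∩ G.neighborFinset u).card :=
        common_big G h hu.1 hu.2.2
      obtain ⟨a, ha⟩ : ((G.neighborFinset x ∩ G.neighborFinset u).erase v).Nonempty := by
        rw [← Finset.card_pos]
        have := Finset.pred_card_le_card_erase
          (s := G.neighborFinset x ∩ G.neighborFinset u) (a := v)
        omega
      simp only [Finset.mem_erase, Finset.mem_inter, mem_neighborFinset] at ha
      obtain ⟨hav, hxa, hua⟩ := ha
      by_cases hv : x ≠ u ∧ x ≠ v ∧ ¬G.Adj v x
      · have h3v : 3 ≤ (G.neighborFinset x ∩ G.neighborFinset v).card :=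
          common_big G h hv.2.1 (fun h' => hv.2.2 h')
        obtain ⟨b, hb⟩ :
            (((G.neighborFinset x ∩ G.neighborFinset v).erase u).erase a).Nonempty := by
          rw [← Finset.card_pos]
          have h5 := Finset.pred_card_le_card_erase
            (s := G.neighborFinset x ∩ G.neighborFinset v) (a := u)
          have h6 := Finset.pred_card_le_card_erase
            (s := (G.neighborFinset x ∩ G.neighborFinset v).erase u) (a := a)
          omega
        simp only [Finset.mem_erase, Finset.mem_inter, mem_neighborFinset] at hb
        obtain ⟨hba, hbu, hxb, hvb⟩ := hb
        exact ⟨(a, b), fun _ => ⟨hxa, hua, hav⟩, fun _ => ⟨hxb, hvb, hbu⟩,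
          fun _ => fun h' => hba h'.symm⟩
      · exact ⟨(a, a), fun _ => ⟨hxa, hua, hav⟩, fun h' => absurd h' hv,
          fun h' => absurd ⟨h'.1, h'.2.1, h'.2.2.2⟩ hv⟩
    · by_cases hv : x ≠ u ∧ x ≠ v ∧ ¬G.Adj v x
      · have h3v : 3 ≤ (G.neighborFinset x ∩ G.neighborFinset v).card :=
          common_big G h hv.2.1 hv.2.2
        obtain ⟨b, hb⟩ : ((G.neighborFinset x ∩ G.neighborFinset v).erase u).Nonempty := by
          rw [← Finset.card_pos]
          have := Finset.pred_card_le_card_erase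
            (s := G.neighborFinset x ∩ G.neighborFinset v) (a := u)
          omega
        simp only [Finset.mem_erase, Finset.mem_inter, mem_neighborFinset] at hb
        obtain ⟨hbu, hxb, hvb⟩ := hb
        exact ⟨(b, b), fun h' => absurd h' hu, fun _ => ⟨hxb, hvb, hbu⟩,
          fun h' => absurd ⟨h'.1, h'.2.1, h'.2.2.1⟩ hu⟩
      · exact ⟨(x, x), fun h' => absurd h' hu, fun h' => absurd h' hv,
          fun h' => absurd ⟨h'.1, h'.2.1, h'.2.2.1⟩ hu⟩
  choose ab hA hB hAB using key
  -- the coloring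
  have hfsymm : ∀ x y, rcfun G u v ab x y = rcfun G u v ab y x := rcfun_symm G u v ab
  refine ⟨Sym2.lift ⟨rcfun G u v ab, hfsymm⟩, ?_⟩
  set c : Sym2 V → Fin 6 := Sym2.lift ⟨rcfun G u v ab, hfsymm⟩ with hcdef
  have hc : ∀ x y : V, c s(x, y) = rcfun G u v ab x y := fun x y => Sym2.lift_mk _ x y
  -- color computation lemmas
  have c_uv : c s(u, v) = 2 := by
    rw [hc]; unfold rcfun; rw [if_pos (Or.inl ⟨rfl, rfl⟩)]
  have c_u : ∀ x : V, x ≠ v → c s(u, x) = 0 := by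
    intro x hxv
    have g1 : ¬((u = u ∧ x = v) ∨ (u = v ∧ x = u)) := by
      rintro (⟨-, h2⟩ | ⟨h1, -⟩)
      · exact hxv h2
      · exact huvne h1
    rw [hc]; unfold rcfun; rw [if_neg g1, if_pos (Or.inl rfl)]
  have c_v : ∀ x : V, x ≠ u → c s(v, x) = 1 := by
    intro x hxu
    have g1 : ¬((v = u ∧ x = v) ∨ (v = v ∧ x = u)) := by
      rintro (⟨h1, -⟩ | ⟨-, h2⟩)
      · exact huvne h1.symm
      · exact hxu h2
    have g2 : ¬(v = u ∨ x = u) := by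
      rintro (h1 | h1)
      · exact huvne h1.symm
      · exact hxu h1
    rw [hc]; unfold rcfun; rw [if_neg g1, if_neg g2, if_pos (Or.inl rfl)]
  have c_α : ∀ x : V, x ≠ u → x ≠ v → ¬G.Adj u x → c s(x, (ab x).1) = 3 := by
    intro x hxu hxv hux
    obtain ⟨hxa, hua, hav⟩ := hA x ⟨hxu, hxv, hux⟩
    have hau : (ab x).1 ≠ u := hua.ne'
    have g1 : ¬((x = u ∧ (ab x).1 = v) ∨ (x = v ∧ (ab x).1 = u)) := by
      rintro (⟨h1, -⟩ | ⟨h1, -⟩)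
      · exact hxu h1
      · exact hxv h1
    have g2 : ¬(x = u ∨ (ab x).1 = u) := by
      rintro (h1 | h1)
      · exact hxu h1
      · exact hau h1
    have g3 : ¬(x = v ∨ (ab x).1 = v) := by
      rintro (h1 | h1)
      · exact hxv h1
      · exact hav h1
    rw [hc]; unfold rcfun
    rw [if_neg g1, if_neg g2, if_neg g3, if_pos (Or.inl ⟨rfl, hux⟩)]
  have c_β : ∀ x : V, x ≠ u → x ≠ v → ¬G.Adj v x → ¬G.Adj u x → c s(x, (ab x).2) = 4 := by
    intro x hxu hxv hvx hux
    obtain ⟨hxb, hvb, hbu⟩ := hB x ⟨hxu, hxv, hvx⟩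
    have hbv : (ab x).2 ≠ v := hvb.ne'
    have g1 : ¬((x = u ∧ (ab x).2 = v) ∨ (x = v ∧ (ab x).2 = u)) := by
      rintro (⟨h1, -⟩ | ⟨h1, -⟩)
      · exact hxu h1
      · exact hxv h1
    have g2 : ¬(x = u ∨ (ab x).2 = u) := by
      rintro (h1 | h1)
      · exact hxu h1
      · exact hbu h1
    have g3 : ¬(x = v ∨ (ab x).2 = v) := by
      rintro (h1 | h1)
      · exact hxv h1
      · exact hbv h1
    have g4 : ¬(((ab x).1 = (ab x).2 ∧ ¬G.Adj u x) ∨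
        ((ab ((ab x).2)).1 = x ∧ ¬G.Adj u (ab x).2)) := by
      rintro (⟨h1, -⟩ | ⟨h1, h2⟩)
      · exact hAB x ⟨hxu, hxv, hux, hvx⟩ h1
      · obtain ⟨-, h5, -⟩ := hA (ab x).2 ⟨hbu, hbv, h2⟩
        rw [h1] at h5
        exact hux h5
    rw [hc]; unfold rcfun
    rw [if_neg g1, if_neg g2, if_neg g3, if_neg g4, if_pos (Or.inl ⟨rfl, hvx⟩)]
  have c_β' : ∀ x : V, x ≠ u → x ≠ v → ¬G.Adj v x →
      c s(x, (ab x).2) = 3 ∨ c s(x, (ab x).2) = 4 := by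
    intro x hxu hxv hvx
    obtain ⟨hxb, hvb, hbu⟩ := hB x ⟨hxu, hxv, hvx⟩
    have hbv : (ab x).2 ≠ v := hvb.ne'
    have g1 : ¬((x = u ∧ (ab x).2 = v) ∨ (x = v ∧ (ab x).2 = u)) := by
      rintro (⟨h1, -⟩ | ⟨h1, -⟩)
      · exact hxu h1
      · exact hxv h1
    have g2 : ¬(x = u ∨ (ab x).2 = u) := by
      rintro (h1 | h1)
      · exact hxu h1
      · exact hbu h1
    have g3 : ¬(x = v ∨ (ab x).2 = v) := by
      rintro (h1 | h1)
      · exact hxv h1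
      · exact hbv h1
    rw [hc]; unfold rcfun
    rw [if_neg g1, if_neg g2, if_neg g3]
    by_cases g4 : ((ab x).1 = (ab x).2 ∧ ¬G.Adj u x) ∨
        ((ab ((ab x).2)).1 = x ∧ ¬G.Adj u (ab x).2)
    · rw [if_pos g4]; exact Or.inl rfl
    · rw [if_neg g4, if_pos (Or.inl ⟨rfl, hvx⟩)]; exact Or.inr rfl
  -- helpers for producing paths
  have flip : ∀ x y : V, (∃ p : G.Walk x y, p.IsPath ∧ (p.edges.map c).Nodup) →
      ∃ p : G.Walk y x, p.IsPath ∧ (p.edges.map c).Nodup := by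
    rintro x y ⟨p, hp, hnd⟩
    refine ⟨p.reverse, hp.reverse, ?_⟩
    rw [Walk.edges_reverse, List.map_reverse, List.nodup_reverse]
    exact hnd
  have single : ∀ x y : V, G.Adj x y → ∃ p : G.Walk x y, p.IsPath ∧ (p.edges.map c).Nodup := by
    intro x y hadj
    refine ⟨Walk.cons hadj Walk.nil, ?_, ?_⟩
    · simp [Walk.isPath_def, hadj.ne]
    · simp
  have harmU : ∀ y : V, y ≠ u → ∃ p : G.Walk u y, p.IsPath ∧ (p.edges.map c).Nodup := by
    intro y hyu
    by_cases h1 : G.Adj u y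
    · exact single u y h1
    have hyv : y ≠ v := by rintro rfl; exact h1 huv
    by_cases h2 : G.Adj v y
    · refine ⟨Walk.cons huv (Walk.cons h2 Walk.nil), ?_, ?_⟩
      · simp only [Walk.isPath_def, Walk.support_cons, Walk.support_nil, List.nodup_cons,
          List.mem_cons, List.mem_singleton, List.not_mem_nil, List.nodup_nil, or_false,
          not_or, not_false_iff, and_true]
        exact ⟨⟨huvne, Ne.symm hyu⟩, h2.ne⟩
      · simp only [Walk.edges_cons, Walk.edges_nil, List.map_cons, List.map_nil,
          c_uv, c_v y hyu]
        decide
    · obtain ⟨hya, hua, hav⟩ := hA y ⟨hyu, hyv, h1⟩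
      refine ⟨Walk.cons hua (Walk.cons hya.symm Walk.nil), ?_, ?_⟩
      · simp only [Walk.isPath_def, Walk.support_cons, Walk.support_nil, List.nodup_cons,
          List.mem_cons, List.mem_singleton, List.not_mem_nil, List.nodup_nil, or_false,
          not_or, not_false_iff, and_true]
        exact ⟨⟨hua.ne, Ne.symm hyu⟩, hya.ne'⟩
      · simp only [Walk.edges_cons, Walk.edges_nil, List.map_cons, List.map_nil]
        rw [c_u _ hav, show s((ab y).1, y) = s(y, (ab y).1) from Sym2.eq_swap,
          c_α y hyu hyv h1]
        decide
  have harmV : ∀ y : V, y ≠ v → ∃ p : G.Walk v y, p.IsPath ∧ (p.edges.map c).Nodup := by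
    intro y hyv
    by_cases h1 : G.Adj v y
    · exact single v y h1
    have hyu : y ≠ u := by rintro rfl; exact h1 huv.symm
    by_cases h2 : G.Adj u y
    · refine ⟨Walk.cons huv.symm (Walk.cons h2 Walk.nil), ?_, ?_⟩
      · simp only [Walk.isPath_def, Walk.support_cons, Walk.support_nil, List.nodup_cons,
          List.mem_cons, List.mem_singleton, List.not_mem_nil, List.nodup_nil, or_false,
          not_or, not_false_iff, and_true]
        exact ⟨⟨Ne.symm huvne, Ne.symm hyv⟩, Ne.symm hyu⟩
      · simp only [Walk.edges_cons, Walk.edges_nil, List.map_cons, List.map_nil]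
        rw [show s(v, u) = s(u, v) from Sym2.eq_swap, c_uv, c_u y hyv]
        decide
    · obtain ⟨hyb, hvb, hbu⟩ := hB y ⟨hyu, hyv, h1⟩
      refine ⟨Walk.cons hvb (Walk.cons hyb.symm Walk.nil), ?_, ?_⟩
      · simp only [Walk.isPath_def, Walk.support_cons, Walk.support_nil, List.nodup_cons,
          List.mem_cons, List.mem_singleton, List.not_mem_nil, List.nodup_nil, or_false,
          not_or, not_false_iff, and_true]
        exact ⟨⟨hvb.ne, Ne.symm hyv⟩, hyb.ne'⟩
      · simp only [Walk.edges_cons, Walk.edges_nil, List.map_cons, List.map_nil]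
        rw [c_v _ hbu, show s((ab y).2, y) = s(y, (ab y).2) from Sym2.eq_swap]
        rcases c_β' y hyu hyv h1 with h3 | h3 <;> rw [h3] <;> decide
  intro x y hxy
  by_cases hxu : x = u
  · subst hxu; exact harmU y (Ne.symm hxy)
  by_cases hyu : y = u
  · subst hyu; exact flip _ _ (harmU x hxu)
  by_cases hxv : x = v
  · subst hxv; exact harmV y (Ne.symm hxy)
  by_cases hyv : y = v
  · subst hyv; exact flip _ _ (harmV x hxv)
  by_cases hadj : G.Adj x y
  · exact single x y hadj
  by_cases hux : G.Adj u x
  · by_cases hvy : G.Adj v y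
    · -- x - u - v - y
      refine ⟨Walk.cons hux.symm (Walk.cons huv (Walk.cons hvy Walk.nil)), ?_, ?_⟩
      · simp only [Walk.isPath_def, Walk.support_cons, Walk.support_nil, List.nodup_cons,
          List.mem_cons, List.mem_singleton, List.not_mem_nil, List.nodup_nil, or_false,
          not_or, not_false_iff, and_true]
        exact ⟨⟨hxu, hxv, hxy⟩, ⟨huvne, Ne.symm hyu⟩, hvy.ne⟩
      · simp only [Walk.edges_cons, Walk.edges_nil, List.map_cons, List.map_nil]
        rw [show s(x, u) = s(u, x) from Sym2.eq_swap, c_u x hxv, c_uv, c_v y hyu]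
        decide
    · -- x - u - v - βy - y
      obtain ⟨hyb, hvb, hbu⟩ := hB y ⟨hyu, hyv, hvy⟩
      have hbv : (ab y).2 ≠ v := hvb.ne'
      have hbx : (ab y).2 ≠ x := by
        rintro h2
        exact hadj (h2 ▸ hyb).symm
      refine ⟨Walk.cons hux.symm (Walk.cons huv (Walk.cons hvb (Walk.cons hyb.symm Walk.nil))),
        ?_, ?_⟩
      · simp only [Walk.isPath_def, Walk.support_cons, Walk.support_nil, List.nodup_cons,
          List.mem_cons, List.mem_singleton, List.not_mem_nil, List.nodup_nil, or_false,
          not_or, not_false_iff, and_true]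
        exact ⟨⟨hxu, hxv, Ne.symm hbx, hxy⟩, ⟨huvne, Ne.symm hbu, Ne.symm hyu⟩,
          ⟨Ne.symm hbv, Ne.symm hyv⟩, hyb.ne'⟩
      · simp only [Walk.edges_cons, Walk.edges_nil, List.map_cons, List.map_nil]
        rw [show s(x, u) = s(u, x) from Sym2.eq_swap, c_u x hxv, c_uv, c_v _ hbu,
          show s((ab y).2, y) = s(y, (ab y).2) from Sym2.eq_swap]
        rcases c_β' y hyu hyv hvy with h3 | h3 <;> rw [h3] <;> decide
  · obtain ⟨hxa, hua, hav⟩ := hA x ⟨hxu, hxv, hux⟩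
    have hau : (ab x).1 ≠ u := hua.ne'
    have hay : (ab x).1 ≠ y := by
      rintro h2
      exact hadj (h2 ▸ hxa)
    by_cases hvy : G.Adj v y
    · -- x - αx - u - v - y
      refine ⟨Walk.cons hxa (Walk.cons hua.symm (Walk.cons huv (Walk.cons hvy Walk.nil))),
        ?_, ?_⟩
      · simp only [Walk.isPath_def, Walk.support_cons, Walk.support_nil, List.nodup_cons,
          List.mem_cons, List.mem_singleton, List.not_mem_nil, List.nodup_nil, or_false,
          not_or, not_false_iff, and_true]
        exact ⟨⟨hxa.ne, hxu, hxv, hxy⟩, ⟨hau, hav, hay⟩, ⟨huvne, Ne.symm hyu⟩, hvy.ne⟩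
      · simp only [Walk.edges_cons, Walk.edges_nil, List.map_cons, List.map_nil]
        rw [c_α x hxu hxv hux, show s((ab x).1, u) = s(u, (ab x).1) from Sym2.eq_swap,
          c_u _ hav, c_uv, c_v y hyu]
        decide
    · obtain ⟨hyb, hvb, hbu⟩ := hB y ⟨hyu, hyv, hvy⟩
      have hbv : (ab y).2 ≠ v := hvb.ne'
      have hbx : (ab y).2 ≠ x := by
        rintro h2
        exact hadj (h2 ▸ hyb).symm
      by_cases huy : G.Adj u y
      · by_cases hvx : G.Adj v x
        · -- x - v - u - y
          refine ⟨Walk.cons hvx.symm (Walk.cons huv.symm (Walk.cons huy Walk.nil)), ?_, ?_⟩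
          · simp only [Walk.isPath_def, Walk.support_cons, Walk.support_nil, List.nodup_cons,
              List.mem_cons, List.mem_singleton, List.not_mem_nil, List.nodup_nil, or_false,
              not_or, not_false_iff, and_true]
            exact ⟨⟨hxv, hxu, hxy⟩, ⟨Ne.symm huvne, Ne.symm hyv⟩, huy.ne⟩
          · simp only [Walk.edges_cons, Walk.edges_nil, List.map_cons, List.map_nil]
            rw [show s(x, v) = s(v, x) from Sym2.eq_swap, c_v x hxu,
              show s(v, u) = s(u, v) from Sym2.eq_swap, c_uv, c_u y hyv]
            decide
        · -- x - βx - v - u - y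
          obtain ⟨hxb, hvbx, hbxu⟩ := hB x ⟨hxu, hxv, hvx⟩
          have hbxv : (ab x).2 ≠ v := hvbx.ne'
          have hbxy : (ab x).2 ≠ y := by
            rintro h2
            exact hadj (h2 ▸ hxb)
          refine ⟨Walk.cons hxb (Walk.cons hvbx.symm (Walk.cons huv.symm
            (Walk.cons huy Walk.nil))), ?_, ?_⟩
          · simp only [Walk.isPath_def, Walk.support_cons, Walk.support_nil, List.nodup_cons,
              List.mem_cons, List.mem_singleton, List.not_mem_nil, List.nodup_nil, or_false,
              not_or, not_false_iff, and_true]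
            exact ⟨⟨hxb.ne, hxv, hxu, hxy⟩, ⟨hbxv, hbxu, hbxy⟩, ⟨Ne.symm huvne, Ne.symm hyv⟩,
              huy.ne⟩
          · simp only [Walk.edges_cons, Walk.edges_nil, List.map_cons, List.map_nil]
            rw [c_β x hxu hxv hvx hux, show s((ab x).2, v) = s(v, (ab x).2) from Sym2.eq_swap,
              c_v _ hbxu, show s(v, u) = s(u, v) from Sym2.eq_swap, c_uv, c_u y hyv]
            decide
      · by_cases hm : (ab x).1 = (ab y).2
        · -- x - αx - y
          have hay2 : G.Adj (ab x).1 y := by rw [hm]; exact hyb.symm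
          refine ⟨Walk.cons hxa (Walk.cons hay2 Walk.nil), ?_, ?_⟩
          · simp only [Walk.isPath_def, Walk.support_cons, Walk.support_nil, List.nodup_cons,
              List.mem_cons, List.mem_singleton, List.not_mem_nil, List.nodup_nil, or_false,
              not_or, not_false_iff, and_true]
            exact ⟨⟨hxa.ne, hxy⟩, hay⟩
          · simp only [Walk.edges_cons, Walk.edges_nil, List.map_cons, List.map_nil]
            rw [c_α x hxu hxv hux, hm,
              show s((ab y).2, y) = s(y, (ab y).2) from Sym2.eq_swap,
              c_β y hyu hyv hvy huy]
            decide
        · -- x - αx - u - v - βy - y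
          refine ⟨Walk.cons hxa (Walk.cons hua.symm (Walk.cons huv (Walk.cons hvb
            (Walk.cons hyb.symm Walk.nil)))), ?_, ?_⟩
          · simp only [Walk.isPath_def, Walk.support_cons, Walk.support_nil, List.nodup_cons,
              List.mem_cons, List.mem_singleton, List.not_mem_nil, List.nodup_nil, or_false,
              not_or, not_false_iff, and_true]
            exact ⟨⟨hxa.ne, hxu, hxv, Ne.symm hbx, hxy⟩, ⟨hau, hav, hm, hay⟩,
              ⟨huvne, Ne.symm hbu, Ne.symm hyu⟩, ⟨Ne.symm hbv, Ne.symm hyv⟩, hyb.ne'⟩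
          · simp only [Walk.edges_cons, Walk.edges_nil, List.map_cons, List.map_nil]
            rw [c_α x hxu hxv hux, show s((ab x).1, u) = s(u, (ab x).1) from Sym2.eq_swap,
              c_u _ hav, c_uv, c_v _ hbu,
              show s((ab y).2, y) = s(y, (ab y).2) from Sym2.eq_swap,
              c_β y hyu hyv hvy huy]
            decide
end
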